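/- arXiv:2412.16096 — 6 statements merged into one kernel-verified Lean document; each statement's English description precedes it below -/
import Mathlib

section
/- Let λ ∈ ℝ, N ∈ ℕ, and let z : ℕ → ℂ^{2n}, zₖ = (xₖ; uₖ), be admissible on [0,N], i.e., xₖ = 𝒜ₖ x_{k+1} + ℬₖ u_{k+1} for all k ∈ {0,…,N}. Then F_λ^{[0,N]}(z) = Σ_{k=0}^{N} (uₖ − 𝒞ₖ(λ) x_{k+1} − 𝒟ₖ(λ) u_{k+1})* xₖ + u_{N+1}* x_{N+1} − u₀* x₀ = Σ_{k=0}^{N} (uₖ − 𝒞ₖ x_{k+1} − 𝒟ₖ u_{k+1})* xₖ + u_{N+1}* x_{N+1} − u₀* x₀ − λ Σ_{k=0}^{N} xₖ* 𝒲ₖ xₖ. -/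
open Matrix Filter
open scoped ComplexOrder

noncomputable def Jmat (n : ℕ) : Matrix (Fin n ⊕ Fin n) (Fin n ⊕ Fin n) ℂ :=
  Matrix.fromBlocks 0 1 (-1) 0

noncomputable def PsiMat {n : ℕ} (W : ℕ → Matrix (Fin n) (Fin n) ℂ) (k : ℕ) :
    Matrix (Fin n ⊕ Fin n) (Fin n ⊕ Fin n) ℂ :=
  Matrix.fromBlocks (W k) 0 0 0

noncomputable def Vmat {n : ℕ} (S : ℕ → Matrix (Fin n ⊕ Fin n) (Fin n ⊕ Fin n) ℂ)
    (W : ℕ → Matrix (Fin n) (Fin n) ℂ) (k : ℕ) :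
    Matrix (Fin n ⊕ Fin n) (Fin n ⊕ Fin n) ℂ :=
  -(Jmat n * PsiMat W k * S k)

/-- The quadratic functional `F_λ^{[M,N]}` associated with the system, where
`𝒞ₖ(λ) = 𝒞ₖ + λ𝒲ₖ𝒜ₖ` and `𝒟ₖ(λ) = 𝒟ₖ + λ𝒲ₖℬₖ`. -/
noncomputable def Fquad {n : ℕ} (A B C D W : ℕ → Matrix (Fin n) (Fin n) ℂ) (lam : ℝ)
    (x u : ℕ → Fin n → ℂ) (M N : ℕ) : ℂ :=
  -(∑ k ∈ Finset.Icc M N,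
      (star (x (k + 1)) ⬝ᵥ (((C k + (lam : ℂ) • (W k * A k))ᴴ * A k) *ᵥ x (k + 1))
        + 2 * ((star (x (k + 1)) ⬝ᵥ (((C k + (lam : ℂ) • (W k * A k))ᴴ * B k) *ᵥ u (k + 1))).re : ℂ)
        + star (u (k + 1)) ⬝ᵥ (((D k + (lam : ℂ) • (W k * B k))ᴴ * B k) *ᵥ u (k + 1))))

/-- System `(S_ν)` is disconjugate on `[M, N+1]`: for every admissible `z = (x; u)` on `[M,N]`
with `x_M = 0 = x_{N+1}` and `x` not identically zero on `[M,N+1]`, the value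
`F_ν^{[M,N]}(z)` is a positive real number. -/
def DisconjugateOn {n : ℕ} (A B C D W : ℕ → Matrix (Fin n) (Fin n) ℂ) (nu : ℝ)
    (M N : ℕ) : Prop :=
  ∀ x u : ℕ → Fin n → ℂ,
    (∀ k, M ≤ k → k ≤ N → x k = A k *ᵥ x (k + 1) + B k *ᵥ u (k + 1)) →
    x M = 0 → x (N + 1) = 0 →
    (∃ k, M ≤ k ∧ k ≤ N + 1 ∧ x k ≠ 0) →
    (Fquad A B C D W nu x u M N).im = 0 ∧ 0 < (Fquad A B C D W nu x u M N).re


private lemma sdot8 {n : ℕ} (M : Matrix (Fin n) (Fin n) ℂ) (v w : Fin n → ℂ) :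
    star (M *ᵥ v) ⬝ᵥ w = star v ⬝ᵥ (Mᴴ *ᵥ w) := by
  rw [Matrix.star_mulVec, Matrix.dotProduct_mulVec]

private lemma conj_sdot8 {n : ℕ} (M : Matrix (Fin n) (Fin n) ℂ) (v w : Fin n → ℂ) :
    (starRingEnd ℂ) (star v ⬝ᵥ (M *ᵥ w)) = star w ⬝ᵥ (Mᴴ *ᵥ v) := by
  rw [← sdot8]
  simp [dotProduct, Finset.mul_sum, map_sum, mul_comm]

private lemma perterm8 {n : ℕ} (A B P Q : Matrix (Fin n) (Fin n) ℂ)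
    (hQ : Qᴴ * A = 1 + Bᴴ * P) (a b u0 : Fin n → ℂ) :
    star (u0 - P *ᵥ a - Q *ᵥ b) ⬝ᵥ (A *ᵥ a + B *ᵥ b)
      = -(star a ⬝ᵥ ((Pᴴ * A) *ᵥ a)
          + 2 * ((star a ⬝ᵥ ((Pᴴ * B) *ᵥ b)).re : ℂ)
          + star b ⬝ᵥ ((Qᴴ * B) *ᵥ b))
        - star b ⬝ᵥ a + star u0 ⬝ᵥ (A *ᵥ a + B *ᵥ b) := by
  have hc : star b ⬝ᵥ ((Bᴴ * P) *ᵥ a)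
      = (starRingEnd ℂ) (star a ⬝ᵥ ((Pᴴ * B) *ᵥ b)) := by
    rw [conj_sdot8]; simp [Matrix.conjTranspose_mul]
  have hre : (2 : ℂ) * ((star a ⬝ᵥ ((Pᴴ * B) *ᵥ b)).re : ℂ)
      = star a ⬝ᵥ ((Pᴴ * B) *ᵥ b) + (starRingEnd ℂ) (star a ⬝ᵥ ((Pᴴ * B) *ᵥ b)) := by
    rw [Complex.add_conj]; push_cast; ring
  simp only [star_sub, sub_dotProduct, sdot8, Matrix.mulVec_add,
    Matrix.mulVec_mulVec, dotProduct_add, hQ, Matrix.add_mulVec,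
    Matrix.one_mulVec, hc, hre]
  ring

private lemma perterm8' {n : ℕ} (A B C D W : Matrix (Fin n) (Fin n) ℂ)
    (hW : Wᴴ = W) (lam : ℝ) (a b u0 : Fin n → ℂ) :
    star (u0 - (C + (lam : ℂ) • (W * A)) *ᵥ a - (D + (lam : ℂ) • (W * B)) *ᵥ b)
        ⬝ᵥ (A *ᵥ a + B *ᵥ b)
      = star (u0 - C *ᵥ a - D *ᵥ b) ⬝ᵥ (A *ᵥ a + B *ᵥ b)
        - (lam : ℂ) * (star (A *ᵥ a + B *ᵥ b) ⬝ᵥ (W *ᵥ (A *ᵥ a + B *ᵥ b))) := by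
  simp only [Matrix.add_mulVec, Matrix.smul_mulVec, star_sub, star_add, star_smul,
    sub_dotProduct, add_dotProduct, smul_dotProduct, smul_eq_mul,
    Complex.star_def, Complex.conj_ofReal, sdot8, Matrix.mulVec_mulVec,
    dotProduct_add, Matrix.mulVec_add, Matrix.conjTranspose_mul, hW, Matrix.mul_assoc]
  ring

/-- for `z = (x; u)` admissible on `[0,N]`, the quadratic functional
`F_λ^{[0,N]}(z)` admits the two displayed representations. -/
theorem statement8 {n : ℕ} (hn : 1 ≤ n)
    (S : ℕ → Matrix (Fin n ⊕ Fin n) (Fin n ⊕ Fin n) ℂ)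
    (A B C D W : ℕ → Matrix (Fin n) (Fin n) ℂ)
    (hS : ∀ k, (S k)ᴴ * Jmat n * S k = Jmat n)
    (hblocks : ∀ k, S k = Matrix.fromBlocks (A k) (B k) (C k) (D k))
    (hW : ∀ k, (W k).PosDef)
    (lam : ℝ) (N : ℕ) (x u : ℕ → Fin n → ℂ)
    (hadm : ∀ k, k ≤ N → x k = A k *ᵥ x (k + 1) + B k *ᵥ u (k + 1)) :
    Fquad A B C D W lam x u 0 N =
        (∑ k ∈ Finset.Icc 0 N,
          star (u k - (C k + (lam : ℂ) • (W k * A k)) *ᵥ x (k + 1)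
              - (D k + (lam : ℂ) • (W k * B k)) *ᵥ u (k + 1)) ⬝ᵥ x k)
          + star (u (N + 1)) ⬝ᵥ x (N + 1) - star (u 0) ⬝ᵥ x 0 ∧
      Fquad A B C D W lam x u 0 N =
        (∑ k ∈ Finset.Icc 0 N,
          star (u k - C k *ᵥ x (k + 1) - D k *ᵥ u (k + 1)) ⬝ᵥ x k)
          + star (u (N + 1)) ⬝ᵥ x (N + 1) - star (u 0) ⬝ᵥ x 0
          - (lam : ℂ) * ∑ k ∈ Finset.Icc 0 N, star (x k) ⬝ᵥ (W k *ᵥ x k) := by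
    -- block identities from the symplectic condition
  have h12 : ∀ k, (A k)ᴴ * D k - (C k)ᴴ * B k = 1 := by
    intro k
    have h := hS k
    rw [hblocks k, Jmat, Matrix.fromBlocks_conjTranspose, Matrix.fromBlocks_multiply,
      Matrix.fromBlocks_multiply] at h
    have h12 := congrArg Matrix.toBlocks₁₂ h
    simp [Matrix.toBlocks_fromBlocks₁₂] at h12
    linear_combination (norm := noncomm_ring) h12
  have h12' : ∀ k, (D k)ᴴ * A k = 1 + (B k)ᴴ * C k := by
    intro k
    have := congrArg Matrix.conjTranspose (h12 k)
    simp only [Matrix.conjTranspose_sub, Matrix.conjTranspose_mul,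
      Matrix.conjTranspose_conjTranspose, Matrix.conjTranspose_one] at this
    linear_combination (norm := noncomm_ring) this
  have hWh : ∀ k, (W k)ᴴ = W k := fun k => (hW k).1
  have hQ : ∀ k, (D k + (lam : ℂ) • (W k * B k))ᴴ * A k
      = 1 + (B k)ᴴ * (C k + (lam : ℂ) • (W k * A k)) := by
    intro k
    simp only [Matrix.conjTranspose_add, Matrix.conjTranspose_smul, Matrix.conjTranspose_mul,
      hWh, Complex.star_def, Complex.conj_ofReal, Matrix.add_mul, Matrix.smul_mul,
      Matrix.mul_add, Matrix.mul_smul, h12', Matrix.mul_assoc]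
    abel
  set T : ℕ → ℂ := fun k =>
      (star (x (k + 1)) ⬝ᵥ (((C k + (lam : ℂ) • (W k * A k))ᴴ * A k) *ᵥ x (k + 1))
        + 2 * ((star (x (k + 1)) ⬝ᵥ (((C k + (lam : ℂ) • (W k * A k))ᴴ * B k) *ᵥ u (k + 1))).re : ℂ)
        + star (u (k + 1)) ⬝ᵥ (((D k + (lam : ℂ) • (W k * B k))ᴴ * B k) *ᵥ u (k + 1))) with hT
  have hF : Fquad A B C D W lam x u 0 N = -(∑ k ∈ Finset.Icc 0 N, T k) := rfl
  have hicc : Finset.Icc 0 N = Finset.range (N + 1) := by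
    rw [Finset.range_eq_Ico, Finset.Ico_add_one_right_eq_Icc]
  have key1 : ∀ k ∈ Finset.Icc 0 N,
      star (u k - (C k + (lam : ℂ) • (W k * A k)) *ᵥ x (k + 1)
          - (D k + (lam : ℂ) • (W k * B k)) *ᵥ u (k + 1)) ⬝ᵥ x k
        = -(T k) + (star (u k) ⬝ᵥ x k - star (u (k + 1)) ⬝ᵥ x (k + 1)) := by
    intro k hk
    have hkN : k ≤ N := by simpa using (Finset.mem_Icc.mp hk).2
    rw [hadm k hkN,
      perterm8 (A k) (B k) (C k + (lam : ℂ) • (W k * A k))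
        (D k + (lam : ℂ) • (W k * B k)) (hQ k) (x (k + 1)) (u (k + 1)) (u k), hT]
    ring
  have hsum1 : (∑ k ∈ Finset.Icc 0 N,
      star (u k - (C k + (lam : ℂ) • (W k * A k)) *ᵥ x (k + 1)
          - (D k + (lam : ℂ) • (W k * B k)) *ᵥ u (k + 1)) ⬝ᵥ x k)
      = -(∑ k ∈ Finset.Icc 0 N, T k)
        + (star (u 0) ⬝ᵥ x 0 - star (u (N + 1)) ⬝ᵥ x (N + 1)) := by
    rw [Finset.sum_congr rfl key1, Finset.sum_add_distrib, Finset.sum_neg_distrib]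
    congr 1
    rw [hicc]
    exact Finset.sum_range_sub' (fun k => star (u k) ⬝ᵥ x k) (N + 1)
  have eq1 : Fquad A B C D W lam x u 0 N =
      (∑ k ∈ Finset.Icc 0 N,
        star (u k - (C k + (lam : ℂ) • (W k * A k)) *ᵥ x (k + 1)
            - (D k + (lam : ℂ) • (W k * B k)) *ᵥ u (k + 1)) ⬝ᵥ x k)
        + star (u (N + 1)) ⬝ᵥ x (N + 1) - star (u 0) ⬝ᵥ x 0 := by
    rw [hF, hsum1]; ring
  refine ⟨eq1, ?_⟩
  have key2 : ∀ k ∈ Finset.Icc 0 N,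
      star (u k - (C k + (lam : ℂ) • (W k * A k)) *ᵥ x (k + 1)
          - (D k + (lam : ℂ) • (W k * B k)) *ᵥ u (k + 1)) ⬝ᵥ x k
        = star (u k - C k *ᵥ x (k + 1) - D k *ᵥ u (k + 1)) ⬝ᵥ x k
          - (lam : ℂ) * (star (x k) ⬝ᵥ (W k *ᵥ x k)) := by
    intro k hk
    have hkN : k ≤ N := by simpa using (Finset.mem_Icc.mp hk).2
    rw [hadm k hkN]
    exact perterm8' (A k) (B k) (C k) (D k) (W k) (hWh k) lam (x (k + 1)) (u (k + 1)) (u k)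
  rw [eq1, Finset.sum_congr rfl key2, Finset.sum_sub_distrib, ← Finset.mul_sum]
  ring
end

section
/- Let λ, ν ∈ ℝ, N ∈ ℕ, and let z, f : ℕ → ℂ^{2n}, zₖ = (xₖ; uₖ), satisfy the nonhomogeneous system zₖ = (𝒮ₖ + ν𝒱ₖ) z_{k+1} − 𝒥 Ψₖ fₖ for all k ∈ {0,…,N}. Then F_λ^{[0,N]}(z) = (ν − λ) Σ_{k=0}^{N} zₖ* Ψₖ zₖ + Σ_{k=0}^{N} fₖ* Ψₖ zₖ + u_{N+1}* x_{N+1} − u₀* x₀. -/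
open Matrix Filter
open scoped ComplexOrder

lemma hd1 {n : ℕ} (M : Matrix (Fin n) (Fin n) ℂ) (a b : Fin n → ℂ) :
    star (M *ᵥ a) ⬝ᵥ b = star a ⬝ᵥ (Mᴴ *ᵥ b) := by
  rw [Matrix.star_mulVec, ← Matrix.dotProduct_mulVec]

lemma hd2 {n : ℕ} (a b : Fin n → ℂ) :
    (starRingEnd ℂ) (star a ⬝ᵥ b) = star b ⬝ᵥ a := by
  rw [← Complex.star_def, ← Matrix.star_dotProduct]

lemma keystep {n : ℕ} (A B C D W : Matrix (Fin n) (Fin n) ℂ) (hW : Wᴴ = W)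
    (hsymp : Dᴴ * A - Bᴴ * C = 1) (lam nu : ℝ) (X U f1 xk uk : Fin n → ℂ)
    (hx : xk = A *ᵥ X + B *ᵥ U)
    (hu : uk = C *ᵥ X + D *ᵥ U + (nu : ℂ) • (W *ᵥ xk) + W *ᵥ f1) :
    star X ⬝ᵥ (((C + (lam : ℂ) • (W * A))ᴴ * A) *ᵥ X)
      + 2 * ((star X ⬝ᵥ (((C + (lam : ℂ) • (W * A))ᴴ * B) *ᵥ U)).re : ℂ)
      + star U ⬝ᵥ (((D + (lam : ℂ) • (W * B))ᴴ * B) *ᵥ U)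
    = star uk ⬝ᵥ xk - star U ⬝ᵥ X
        - ((nu - lam : ℝ) : ℂ) * (star xk ⬝ᵥ (W *ᵥ xk)) - star f1 ⬝ᵥ (W *ᵥ xk) := by
  have hre : (2 : ℂ) * ((star X ⬝ᵥ (((C + (lam : ℂ) • (W * A))ᴴ * B) *ᵥ U)).re : ℂ)
      = star X ⬝ᵥ (((C + (lam : ℂ) • (W * A))ᴴ * B) *ᵥ U)
        + (starRingEnd ℂ) (star X ⬝ᵥ (((C + (lam : ℂ) • (W * A))ᴴ * B) *ᵥ U)) := by
    rw [Complex.add_conj]; push_cast; ring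
  have hDA : star U ⬝ᵥ (Dᴴ *ᵥ (A *ᵥ X))
      = star U ⬝ᵥ X + star U ⬝ᵥ (Bᴴ *ᵥ (C *ᵥ X)) := by
    have : Dᴴ * A = 1 + Bᴴ * C := by rw [← hsymp, sub_add_cancel]
    rw [Matrix.mulVec_mulVec, this, Matrix.add_mulVec, Matrix.one_mulVec,
      dotProduct_add, Matrix.mulVec_mulVec]
  rw [hre, hd2]
  subst hx hu
  simp only [Matrix.conjTranspose_add, Matrix.conjTranspose_smul, Matrix.conjTranspose_mul, Matrix.conjTranspose_conjTranspose,
    hW, Complex.star_def, Complex.conj_ofReal, Matrix.add_mulVec, Matrix.smul_mulVec,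
    Matrix.mulVec_add, Matrix.mulVec_smul, ← Matrix.mulVec_mulVec,
    dotProduct_add, dotProduct_smul, star_add, star_smul,
    add_dotProduct, smul_dotProduct, hd1, smul_eq_mul]
  push_cast
  linear_combination -hDA

/-- if `z = (x; u)` solves the nonhomogeneous system
`zₖ = (𝒮ₖ + ν𝒱ₖ) z_{k+1} − 𝒥 Ψₖ fₖ` on `{0,…,N}`, then
`F_λ^{[0,N]}(z) = (ν − λ) Σ zₖ*Ψₖzₖ + Σ fₖ*Ψₖzₖ + u_{N+1}*x_{N+1} − u₀*x₀`. -/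
theorem statement9 {n : ℕ} (hn : 1 ≤ n)
    (S : ℕ → Matrix (Fin n ⊕ Fin n) (Fin n ⊕ Fin n) ℂ)
    (A B C D W : ℕ → Matrix (Fin n) (Fin n) ℂ)
    (hS : ∀ k, (S k)ᴴ * Jmat n * S k = Jmat n)
    (hblocks : ∀ k, S k = Matrix.fromBlocks (A k) (B k) (C k) (D k))
    (hW : ∀ k, (W k).PosDef)
    (lam nu : ℝ) (N : ℕ) (x u : ℕ → Fin n → ℂ) (f : ℕ → (Fin n ⊕ Fin n) → ℂ)
    (hsol : ∀ k, k ≤ N → Sum.elim (x k) (u k) =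
        (S k + (nu : ℂ) • Vmat S W k) *ᵥ Sum.elim (x (k + 1)) (u (k + 1))
          - Jmat n *ᵥ (PsiMat W k *ᵥ f k)) :
    Fquad A B C D W lam x u 0 N =
      ((nu - lam : ℝ) : ℂ) *
          ∑ k ∈ Finset.Icc 0 N,
            star (Sum.elim (x k) (u k)) ⬝ᵥ (PsiMat W k *ᵥ Sum.elim (x k) (u k))
        + ∑ k ∈ Finset.Icc 0 N,
            star (f k) ⬝ᵥ (PsiMat W k *ᵥ Sum.elim (x k) (u k))
        + star (u (N + 1)) ⬝ᵥ x (N + 1) - star (u 0) ⬝ᵥ x 0 := by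
  
  have hWH : ∀ k, (W k)ᴴ = W k := fun k => (hW k).1
  have hsymp : ∀ k, (D k)ᴴ * A k - (B k)ᴴ * C k = 1 := by
    intro k
    have hs := hS k
    rw [hblocks k] at hs
    simp only [Jmat, Matrix.fromBlocks_conjTranspose, Matrix.fromBlocks_multiply,
      Matrix.mul_zero, Matrix.zero_mul, Matrix.mul_one, Matrix.mul_neg,
      zero_add, add_zero, Matrix.neg_mul] at hs
    have h21 := congrArg Matrix.toBlocks₂₁ hs
    simp only [Matrix.toBlocks_fromBlocks₂₁] at h21
    calc (D k)ᴴ * A k - (B k)ᴴ * C k = -(-((D k)ᴴ * A k) + (B k)ᴴ * C k) := by abel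
      _ = 1 := by rw [h21]; exact neg_neg 1
  have hcomp : ∀ k, k ≤ N → (x k = A k *ᵥ x (k + 1) + B k *ᵥ u (k + 1) ∧
      u k = C k *ᵥ x (k + 1) + D k *ᵥ u (k + 1)
        + (nu : ℂ) • (W k *ᵥ (A k *ᵥ x (k + 1) + B k *ᵥ u (k + 1)))
        + W k *ᵥ (f k ∘ Sum.inl)) := by
    intro k hk
    have hs := hsol k hk
    have hM : Matrix.fromBlocks (A k) (B k) (C k) (D k) + (nu : ℂ) • Vmat S W k
        = Matrix.fromBlocks (A k) (B k)
            (C k + (nu : ℂ) • (W k * A k)) (D k + (nu : ℂ) • (W k * B k)) := by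
      simp only [Vmat, Jmat, PsiMat, hblocks, Matrix.fromBlocks_multiply]
      simp [Matrix.fromBlocks_smul, Matrix.fromBlocks_neg, Matrix.fromBlocks_add]
    rw [hblocks k, hM] at hs
    simp only [Jmat, PsiMat, Matrix.fromBlocks_mulVec, Sum.elim_comp_inl, Sum.elim_comp_inr,
      Matrix.zero_mulVec, Matrix.one_mulVec, Matrix.neg_mulVec, add_zero, zero_add,
      Matrix.add_mulVec, Matrix.smul_mulVec, ← Matrix.mulVec_mulVec] at hs
    constructor
    · funext i; have := congrFun hs (Sum.inl i)
      simp only [Sum.elim_inl, Sum.elim_inr, Pi.sub_apply, Pi.add_apply, Pi.smul_apply,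
        Pi.neg_apply, Pi.zero_apply, smul_eq_mul, Matrix.mulVec_add, Matrix.mulVec_smul] at this ⊢
      linear_combination this
    · funext i; have := congrFun hs (Sum.inr i)
      simp only [Sum.elim_inl, Sum.elim_inr, Pi.sub_apply, Pi.add_apply, Pi.smul_apply,
        Pi.neg_apply, Pi.zero_apply, smul_eq_mul, Matrix.mulVec_add, Matrix.mulVec_smul] at this ⊢
      linear_combination this
  have hstarelim : ∀ (a b : Fin n → ℂ), star (Sum.elim a b) = Sum.elim (star a) (star b) := by
    intro a b; funext i; cases i <;> rfl
  have hQ : ∀ k, star (Sum.elim (x k) (u k)) ⬝ᵥ (PsiMat W k *ᵥ Sum.elim (x k) (u k))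
      = star (x k) ⬝ᵥ (W k *ᵥ x k) := by
    intro k
    simp [PsiMat, Matrix.fromBlocks_mulVec, hstarelim, sumElim_dotProduct_sumElim]
  have hF : ∀ k, star (f k) ⬝ᵥ (PsiMat W k *ᵥ Sum.elim (x k) (u k))
      = star (f k ∘ Sum.inl) ⬝ᵥ (W k *ᵥ x k) := by
    intro k
    have hf : star (f k) = Sum.elim (star (f k ∘ Sum.inl)) (star (f k ∘ Sum.inr)) := by
      funext i; cases i <;> rfl
    simp [PsiMat, Matrix.fromBlocks_mulVec, hf, sumElim_dotProduct_sumElim]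
  have hkey : ∀ k ∈ Finset.Icc 0 N,
      (star (x (k + 1)) ⬝ᵥ (((C k + (lam : ℂ) • (W k * A k))ᴴ * A k) *ᵥ x (k + 1))
        + 2 * ((star (x (k + 1)) ⬝ᵥ (((C k + (lam : ℂ) • (W k * A k))ᴴ * B k) *ᵥ u (k + 1))).re : ℂ)
        + star (u (k + 1)) ⬝ᵥ (((D k + (lam : ℂ) • (W k * B k))ᴴ * B k) *ᵥ u (k + 1)))
      = star (u k) ⬝ᵥ x k - star (u (k + 1)) ⬝ᵥ x (k + 1)
          - ((nu - lam : ℝ) : ℂ) * (star (x k) ⬝ᵥ (W k *ᵥ x k))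
          - star (f k ∘ Sum.inl) ⬝ᵥ (W k *ᵥ x k) := by
    intro k hk
    obtain ⟨hx, hu⟩ := hcomp k (by simpa using (Finset.mem_Icc.mp hk).2)
    rw [← hx] at hu
    exact keystep (A k) (B k) (C k) (D k) (W k) (hWH k) (hsymp k) lam nu
      (x (k + 1)) (u (k + 1)) (f k ∘ Sum.inl) (x k) (u k) hx hu
  have hIcc : Finset.Icc 0 N = Finset.range (N + 1) := by
    rw [Finset.range_eq_Ico, Finset.Ico_add_one_right_eq_Icc]
  rw [Fquad, Finset.sum_congr rfl hkey,
    Finset.sum_congr rfl (fun k _ => hQ k), Finset.sum_congr rfl (fun k _ => hF k), hIcc]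
  rw [Finset.sum_sub_distrib, Finset.sum_sub_distrib,
    Finset.sum_range_sub' (fun k => star (u k) ⬝ᵥ x k), Finset.mul_sum]
  ring
end

section
/- Let λ ∈ ℝ and let z, f : ℕ → ℂ^{2n}, zₖ = (xₖ; uₖ), be such that z₀ = 0, z is admissible (xₖ = 𝒜ₖ x_{k+1} + ℬₖ u_{k+1} for all k), 𝒥(zₖ − 𝒮ₖ z_{k+1}) = Ψₖ fₖ for all k ∈ ℕ, and zₖ = 0 for all k > N for some N ∈ ℕ. Then F_λ^{[0,N]}(z) = Σ_{k=0}^{N} fₖ* Ψₖ zₖ − λ Σ_{k=0}^{N} zₖ* Ψₖ zₖ. -/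
open Matrix Filter
open scoped ComplexOrder

lemma key {n : ℕ} (A B C D W : Matrix (Fin n) (Fin n) ℂ) (hW : Wᴴ = W)
    (h1 : Dᴴ * A = 1 + Bᴴ * C) (lam : ℝ) (a b g xk uk : Fin n → ℂ)
    (hx : xk = A *ᵥ a + B *ᵥ b) (hu : uk = C *ᵥ a + D *ᵥ b + W *ᵥ g) :
    star a ⬝ᵥ (((C + (lam : ℂ) • (W * A))ᴴ * A) *ᵥ a)
      + 2 * (((star a ⬝ᵥ (((C + (lam : ℂ) • (W * A))ᴴ * B) *ᵥ b)).re : ℂ))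
      + star b ⬝ᵥ (((D + (lam : ℂ) • (W * B))ᴴ * B) *ᵥ b)
    = star uk ⬝ᵥ xk - star b ⬝ᵥ a - star g ⬝ᵥ (W *ᵥ xk)
        + (lam : ℂ) * (star xk ⬝ᵥ (W *ᵥ xk)) := by
  have hre : ∀ z : ℂ, 2 * (z.re : ℂ) = z + star z := by
    intro z
    rw [show (star z) = (starRingEnd ℂ) z from rfl, Complex.add_conj]
    push_cast; ring
  have hstarD : ∀ (v w : Fin n → ℂ) (M : Matrix (Fin n) (Fin n) ℂ),
      star ((star v ᵥ* M) ⬝ᵥ w) = (star w ᵥ* Mᴴ) ⬝ᵥ v := by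
    intro v w M
    rw [← dotProduct_mulVec, ← star_dotProduct, star_mulVec]
  subst hx hu
  rw [hre]
  simp only [Matrix.conjTranspose_add, Matrix.conjTranspose_smul, Matrix.conjTranspose_mul,
    Matrix.conjTranspose_conjTranspose,
    Complex.star_def, Complex.conj_ofReal, hW, Matrix.add_mul, Matrix.smul_mul,
    Matrix.mul_assoc, h1, Matrix.mul_add, Matrix.mul_one,
    Matrix.add_mulVec, Matrix.smul_mulVec, Matrix.mulVec_add, Matrix.mulVec_smul,
    Matrix.mulVec_mulVec, Matrix.one_mulVec,
    dotProduct_mulVec, star_mulVec, vecMul_vecMul,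
    Matrix.vecMul_add, Matrix.add_vecMul, Matrix.smul_vecMul,
    Matrix.vecMul_one,
    dotProduct_add, add_dotProduct, star_add, smul_dotProduct, dotProduct_smul,
    smul_eq_mul, star_mul', _root_.map_mul, hstarD]
  ring

lemma elim_eq_iff {n : ℕ} {p q r s : Fin n → ℂ} :
    Sum.elim p q = Sum.elim r s ↔ p = r ∧ q = s := by
  constructor
  · intro h
    exact ⟨funext fun i => congrFun h (Sum.inl i), funext fun i => congrFun h (Sum.inr i)⟩
  · rintro ⟨rfl, rfl⟩; rfl

lemma star_elim {n : ℕ} (p q : Fin n → ℂ) :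
    star (Sum.elim p q) = Sum.elim (star p) (star q) := by
  funext i; cases i <;> rfl

/-- if `z₀ = 0`, `z` is admissible, `𝒥(zₖ − 𝒮ₖ z_{k+1}) = Ψₖ fₖ` for all `k`,
and `zₖ = 0` for all `k > N`, then `F_λ^{[0,N]}(z) = Σ fₖ*Ψₖzₖ − λ Σ zₖ*Ψₖzₖ`. -/
theorem statement10 {n : ℕ} (hn : 1 ≤ n)
    (S : ℕ → Matrix (Fin n ⊕ Fin n) (Fin n ⊕ Fin n) ℂ)
    (A B C D W : ℕ → Matrix (Fin n) (Fin n) ℂ)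
    (hS : ∀ k, (S k)ᴴ * Jmat n * S k = Jmat n)
    (hblocks : ∀ k, S k = Matrix.fromBlocks (A k) (B k) (C k) (D k))
    (hW : ∀ k, (W k).PosDef)
    (lam : ℝ) (x u : ℕ → Fin n → ℂ) (f : ℕ → (Fin n ⊕ Fin n) → ℂ)
    (hz0 : Sum.elim (x 0) (u 0) = 0)
    (hadm : ∀ k, x k = A k *ᵥ x (k + 1) + B k *ᵥ u (k + 1))
    (heq : ∀ k, Jmat n *ᵥ (Sum.elim (x k) (u k) - S k *ᵥ Sum.elim (x (k + 1)) (u (k + 1)))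
        = PsiMat W k *ᵥ f k)
    (N : ℕ) (hfin : ∀ k, N < k → Sum.elim (x k) (u k) = 0) :
    Fquad A B C D W lam x u 0 N =
      (∑ k ∈ Finset.Icc 0 N, star (f k) ⬝ᵥ (PsiMat W k *ᵥ Sum.elim (x k) (u k)))
        - (lam : ℂ) * ∑ k ∈ Finset.Icc 0 N,
            star (Sum.elim (x k) (u k)) ⬝ᵥ (PsiMat W k *ᵥ Sum.elim (x k) (u k)) := by
  -- symplectic relation
  have h1 : ∀ k, (D k)ᴴ * (A k) = 1 + (B k)ᴴ * (C k) := by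
    intro k
    have h := hS k
    rw [hblocks k] at h
    unfold Jmat at h
    rw [Matrix.fromBlocks_conjTranspose, Matrix.fromBlocks_multiply,
      Matrix.fromBlocks_multiply] at h
    have h21 := congrArg Matrix.toBlocks₂₁ h
    simp only [Matrix.toBlocks_fromBlocks₂₁] at h21
    -- h21 : ... = -1
    have h21' : (B k)ᴴ * (C k) - (D k)ᴴ * (A k) = -1 := by
      rw [← h21]; noncomm_ring
    have := sub_eq_iff_eq_add.mp h21'
    linear_combination (norm := noncomm_ring) -this
  -- the u-recursion
  have hg : ∀ k, u k = C k *ᵥ x (k + 1) + D k *ᵥ u (k + 1) + W k *ᵥ (f k ∘ Sum.inl) := by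
    intro k
    have h := heq k
    rw [hblocks k] at h
    unfold Jmat PsiMat at h
    rw [Matrix.fromBlocks_mulVec, Matrix.fromBlocks_mulVec] at h
    have hsub : Sum.elim (x k) (u k) - Sum.elim
        ((A k *ᵥ (Sum.elim (x (k+1)) (u (k+1)) ∘ Sum.inl))
          + (B k *ᵥ (Sum.elim (x (k+1)) (u (k+1)) ∘ Sum.inr)))
        ((C k *ᵥ (Sum.elim (x (k+1)) (u (k+1)) ∘ Sum.inl))
          + (D k *ᵥ (Sum.elim (x (k+1)) (u (k+1)) ∘ Sum.inr)))
        = Sum.elim (x k - (A k *ᵥ x (k+1) + B k *ᵥ u (k+1)))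
            (u k - (C k *ᵥ x (k+1) + D k *ᵥ u (k+1))) := by
      funext i; cases i <;> simp
    rw [hsub, Matrix.fromBlocks_mulVec] at h
    have h' := (elim_eq_iff.mp h).1
    simp only [Sum.elim_comp_inl, Sum.elim_comp_inr, Matrix.zero_mulVec, Matrix.one_mulVec,
      add_zero, zero_add, Matrix.mulVec_zero] at h'
    rw [sub_eq_iff_eq_add] at h'
    rw [h']; abel
  have hWH : ∀ k, (W k)ᴴ = W k := fun k => (hW k).1
  have hx0 : x 0 = 0 := funext fun i => congrFun hz0 (Sum.inl i)
  have hu0 : u 0 = 0 := funext fun i => congrFun hz0 (Sum.inr i)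
  have hxN : x (N+1) = 0 :=
    funext fun i => congrFun (hfin (N+1) (Nat.lt_succ_self N)) (Sum.inl i)
  have huN : u (N+1) = 0 :=
    funext fun i => congrFun (hfin (N+1) (Nat.lt_succ_self N)) (Sum.inr i)
  have hPsi : ∀ (k : ℕ) (v : (Fin n ⊕ Fin n) → ℂ),
      star v ⬝ᵥ (PsiMat W k *ᵥ Sum.elim (x k) (u k))
        = star (v ∘ Sum.inl) ⬝ᵥ (W k *ᵥ x k) := by
    intro k v
    unfold PsiMat
    rw [Matrix.fromBlocks_mulVec]
    simp only [Sum.elim_comp_inl, Sum.elim_comp_inr, Matrix.zero_mulVec, add_zero, zero_add]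
    conv_lhs => rw [← Sum.elim_comp_inl_inr v]
    rw [star_elim, sumElim_dotProduct_sumElim]
    simp
  have hterm : ∀ k,
      star (x (k + 1)) ⬝ᵥ (((C k + (lam : ℂ) • (W k * A k))ᴴ * A k) *ᵥ x (k + 1))
        + 2 * ((star (x (k + 1)) ⬝ᵥ (((C k + (lam : ℂ) • (W k * A k))ᴴ * B k) *ᵥ u (k + 1))).re : ℂ)
        + star (u (k + 1)) ⬝ᵥ (((D k + (lam : ℂ) • (W k * B k))ᴴ * B k) *ᵥ u (k + 1))
      = (star (u k) ⬝ᵥ x k - star (u (k+1)) ⬝ᵥ x (k+1))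
          + (-(star (f k ∘ Sum.inl) ⬝ᵥ (W k *ᵥ x k))
              + (lam : ℂ) * (star (x k) ⬝ᵥ (W k *ᵥ x k))) := by
    intro k
    rw [key (A k) (B k) (C k) (D k) (W k) (hWH k) (h1 k) lam _ _ _ _ _ (hadm k) (hg k)]
    ring
  have hIcc : Finset.Icc 0 N = Finset.range (N+1) := by
    rw [Finset.range_eq_Ico, Finset.Ico_add_one_right_eq_Icc]
  unfold Fquad
  rw [Finset.sum_congr rfl fun k _ => hterm k, hIcc, Finset.sum_add_distrib,
    Finset.sum_range_sub' (fun k => star (u k) ⬝ᵥ x k)]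
  rw [Finset.sum_congr rfl fun k _ => hPsi k (f k),
    Finset.sum_congr rfl fun k _ => hPsi k (Sum.elim (x k) (u k))]
  simp only [Sum.elim_comp_inl, hu0, hx0, huN, hxN, star_zero, zero_dotProduct,
    dotProduct_zero, sub_zero, zero_sub, zero_add, sub_self,
    Finset.sum_add_distrib, Finset.sum_neg_distrib, Finset.mul_sum]
  ring
end

section
/- Let λ, ν ∈ ℝ, M ≤ N in ℕ, and let z : ℕ → ℂ^{2n}, zₖ = (xₖ; uₖ), satisfy xₖ = 𝒜ₖ x_{k+1} + ℬₖ u_{k+1} for all k ∈ {M,…,N}. Then F_λ^{[M,N]}(z) = F_ν^{[M,N]}(z) + (ν − λ) Σ_{k=M}^{N} xₖ* 𝒲ₖ xₖ. Consequently, if λ ≤ ν and system (S_ν) is disconjugate on [M, N+1], then system (S_λ) is disconjugate on [M, N+1]. -/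
open Matrix Filter
open scoped ComplexOrder

/-!
Along an admissible sequence `𝒜ₖ x_{k+1} + ℬₖ u_{k+1} = xₖ`, so all `λ`-dependent terms of the
`k`-th summand of `F_λ` combine into `λ xₖ* 𝒲ₖ xₖ`. Hence `F_λ` is affine in `λ` with slope
`-Σ xₖ* 𝒲ₖ xₖ ≤ 0`, and positivity of `F_ν` passes to `F_λ` for `λ ≤ ν`.
-/

section HermitianForm

variable {m n : Type*} [Fintype m] [Fintype n]

lemma star_add_dotProduct_mulVec_add {W : Matrix m m ℂ} (hW : W.IsHermitian)
    (A B : Matrix m n ℂ) (v w : n → ℂ) :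
    star (A *ᵥ v + B *ᵥ w) ⬝ᵥ (W *ᵥ (A *ᵥ v + B *ᵥ w)) =
      star v ⬝ᵥ ((Aᴴ * W * A) *ᵥ v) + 2 * ((star v ⬝ᵥ ((Aᴴ * W * B) *ᵥ w)).re : ℂ)
        + star w ⬝ᵥ ((Bᴴ * W * B) *ᵥ w) := by
  have hcross : star w ⬝ᵥ ((Bᴴ * W * A) *ᵥ v) = star (star v ⬝ᵥ ((Aᴴ * W * B) *ᵥ w)) := by
    conv_rhs => rw [star_dotProduct, star_star, star_mulVec, ← dotProduct_mulVec]
    simp [conjTranspose_mul, hW.eq, Matrix.mul_assoc]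
  calc star (A *ᵥ v + B *ᵥ w) ⬝ᵥ (W *ᵥ (A *ᵥ v + B *ᵥ w))
      = star v ⬝ᵥ ((Aᴴ * W * A) *ᵥ v) + (star v ⬝ᵥ ((Aᴴ * W * B) *ᵥ w)
          + star w ⬝ᵥ ((Bᴴ * W * A) *ᵥ v)) + star w ⬝ᵥ ((Bᴴ * W * B) *ᵥ w) := by
        simp only [star_add, add_dotProduct, mulVec_add, dotProduct_add, star_mulVec,
          dotProduct_mulVec, add_vecMul, vecMul_vecMul, Matrix.mul_assoc]
        ring
    _ = _ := by
        rw [hcross, Complex.star_def, Complex.add_conj]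
        push_cast
        ring

end HermitianForm

section QuadraticFunctional

variable {n : ℕ}

/-- The `k`-th summand of `-Fquad`, evaluated at `v = x_{k+1}`, `w = u_{k+1}`. -/
def fquadSummand (A B C D W : Matrix (Fin n) (Fin n) ℂ) (t : ℝ) (v w : Fin n → ℂ) : ℂ :=
  star v ⬝ᵥ (((C + (t : ℂ) • (W * A))ᴴ * A) *ᵥ v)
    + 2 * ((star v ⬝ᵥ (((C + (t : ℂ) • (W * A))ᴴ * B) *ᵥ w)).re : ℂ)
    + star w ⬝ᵥ (((D + (t : ℂ) • (W * B))ᴴ * B) *ᵥ w)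

lemma fquadSummand_eq_add_mul {A B C D W : Matrix (Fin n) (Fin n) ℂ} (hW : W.IsHermitian)
    (t : ℝ) (v w : Fin n → ℂ) :
    fquadSummand A B C D W t v w =
      fquadSummand A B C D W 0 v w
        + t * (star (A *ᵥ v + B *ᵥ w) ⬝ᵥ (W *ᵥ (A *ᵥ v + B *ᵥ w))) := by
  rw [star_add_dotProduct_mulVec_add hW]
  simp only [fquadSummand, conjTranspose_add, conjTranspose_smul, Complex.star_def,
    Complex.conj_ofReal, conjTranspose_mul, hW.eq, add_mul, smul_mul_assoc, add_mulVec,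
    smul_mulVec, dotProduct_add, dotProduct_smul, smul_eq_mul, Complex.add_re,
    Complex.re_ofReal_mul, Matrix.mul_assoc, Complex.ofReal_zero, zero_smul, add_zero]
  push_cast
  ring

lemma Fquad_eq_sub_mul {A B C D W : ℕ → Matrix (Fin n) (Fin n) ℂ}
    (hW : ∀ k, (W k).IsHermitian) (lam : ℝ) {x u : ℕ → Fin n → ℂ} {M N : ℕ}
    (hadm : ∀ k, M ≤ k → k ≤ N → x k = A k *ᵥ x (k + 1) + B k *ᵥ u (k + 1)) :
    Fquad A B C D W lam x u M N =
      Fquad A B C D W 0 x u M N - lam * ∑ k ∈ Finset.Icc M N, star (x k) ⬝ᵥ (W k *ᵥ x k) := by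
  have hsummand : ∀ k ∈ Finset.Icc M N,
      fquadSummand (A k) (B k) (C k) (D k) (W k) lam (x (k + 1)) (u (k + 1)) =
        fquadSummand (A k) (B k) (C k) (D k) (W k) 0 (x (k + 1)) (u (k + 1))
          + lam * (star (x k) ⬝ᵥ (W k *ᵥ x k)) := by
    intro k hk
    obtain ⟨hMk, hkN⟩ := Finset.mem_Icc.1 hk
    rw [fquadSummand_eq_add_mul (hW k), ← hadm k hMk hkN]
  change -(∑ k ∈ Finset.Icc M N, fquadSummand _ _ _ _ _ lam _ _) =
    -(∑ k ∈ Finset.Icc M N, fquadSummand _ _ _ _ _ 0 _ _) - _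
  rw [Finset.sum_congr rfl hsummand, Finset.sum_add_distrib, ← Finset.mul_sum]
  ring

end QuadraticFunctional

theorem statement11_general {n : ℕ}
    (A B C D W : ℕ → Matrix (Fin n) (Fin n) ℂ)
    (hW : ∀ k, (W k).PosDef)
    (lam nu : ℝ) (M N : ℕ) :
    (∀ x u : ℕ → Fin n → ℂ,
        (∀ k, M ≤ k → k ≤ N → x k = A k *ᵥ x (k + 1) + B k *ᵥ u (k + 1)) →
        Fquad A B C D W lam x u M N =
          Fquad A B C D W nu x u M N +
            ((nu - lam : ℝ) : ℂ) * ∑ k ∈ Finset.Icc M N, star (x k) ⬝ᵥ (W k *ᵥ x k)) ∧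
      (lam ≤ nu → DisconjugateOn A B C D W nu M N → DisconjugateOn A B C D W lam M N) := by
  have hshift : ∀ x u : ℕ → Fin n → ℂ,
      (∀ k, M ≤ k → k ≤ N → x k = A k *ᵥ x (k + 1) + B k *ᵥ u (k + 1)) →
      Fquad A B C D W lam x u M N =
        Fquad A B C D W nu x u M N +
          ((nu - lam : ℝ) : ℂ) * ∑ k ∈ Finset.Icc M N, star (x k) ⬝ᵥ (W k *ᵥ x k) := by
    intro x u hadm
    rw [Fquad_eq_sub_mul (fun k => (hW k).isHermitian) lam hadm,
      Fquad_eq_sub_mul (fun k => (hW k).isHermitian) nu hadm]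
    push_cast
    ring
  refine ⟨hshift, fun hle hdis x u hadm hM hN hx => ?_⟩
  have hpos_iff : ∀ z : ℂ, z.im = 0 ∧ 0 < z.re ↔ 0 < z := fun z => by
    rw [Complex.pos_iff, eq_comm, and_comm]
  rw [hpos_iff, hshift x u hadm]
  refine add_pos_of_pos_of_nonneg ((hpos_iff _).1 (hdis x u hadm hM hN hx)) (mul_nonneg ?_ ?_)
  · exact_mod_cast sub_nonneg.2 hle
  · exact Finset.sum_nonneg fun k _ => (hW k).posSemidef.dotProduct_mulVec_nonneg (x k)

/-- `F_λ^{[M,N]}(z) = F_ν^{[M,N]}(z) + (ν − λ) Σ xₖ*𝒲ₖxₖ` for any `z`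
admissible on `[M,N]`; consequently, if `λ ≤ ν` and `(S_ν)` is disconjugate on `[M,N+1]`,
then `(S_λ)` is disconjugate on `[M,N+1]`. -/
theorem statement11 {n : ℕ} (hn : 1 ≤ n)
    (S : ℕ → Matrix (Fin n ⊕ Fin n) (Fin n ⊕ Fin n) ℂ)
    (A B C D W : ℕ → Matrix (Fin n) (Fin n) ℂ)
    (hS : ∀ k, (S k)ᴴ * Jmat n * S k = Jmat n)
    (hblocks : ∀ k, S k = Matrix.fromBlocks (A k) (B k) (C k) (D k))
    (hW : ∀ k, (W k).PosDef)
    (lam nu : ℝ) (M N : ℕ) (hMN : M ≤ N) :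
    (∀ x u : ℕ → Fin n → ℂ,
        (∀ k, M ≤ k → k ≤ N → x k = A k *ᵥ x (k + 1) + B k *ᵥ u (k + 1)) →
        Fquad A B C D W lam x u M N =
          Fquad A B C D W nu x u M N +
            ((nu - lam : ℝ) : ℂ) * ∑ k ∈ Finset.Icc M N, star (x k) ⬝ᵥ (W k *ᵥ x k)) ∧
      (lam ≤ nu → DisconjugateOn A B C D W nu M N → DisconjugateOn A B C D W lam M N) :=
  statement11_general A B C D W hW lam nu M N
end

section
/- (Characterization of the recessive solution.) Let ν ∈ ℝ be such that system (S_ν) is nonoscillatory and eventually controllable, and let Z̃ = (X̃; Ũ) be a conjoined basis of (S_ν) and k₀ ∈ ℕ be such that X̃ₖ is invertible and −X̃ₖ^{−1} ℬₖ (X̃_{k+1}*)^{−1} is positive semidefinite for all k ≥ k₀. Then Z̃ is a recessive solution of (S_ν) if and only if the smallest eigenvalue of the Hermitian positive semidefinite matrix −Σ_{j=k₀}^{k} X̃_j^{−1} ℬ_j (X̃_{j+1}*)^{−1} tends to +∞ as k → ∞ (equivalently, for every c > 0 there exists K such that −Σ_{j=k₀}^{k} X̃_j^{−1} ℬ_j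 (X̃_{j+1}*)^{−1} − c·Iₙ is positive semidefinite for all k ≥ K). -/
/-!
Let `Tₖ = -∑_{j=k₀}^{k} X̃ⱼ⁻¹ ℬⱼ (X̃ⱼ₊₁*)⁻¹ ⪰ 0`. For a conjoined basis `Z = (X; U)` normalized by
`Zₖ* 𝒥 Z̃ₖ = I`, the Wronskian identity and the symmetry of `X̃* Ũ` telescope the recurrence into
`X̃ₖ₊₁⁻¹ Xₖ₊₁ = P - Tₖ` with `P = X̃ₖ₀⁻¹ Xₖ₀`, so `Xₖ₊₁⁻¹ X̃ₖ₊₁ = (P - Tₖ)⁻¹`.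
If `Tₖ ⪰ c I` with `c > ‖P‖`, then `‖(P - Tₖ)v‖ ≥ (c - ‖P‖)‖v‖`, so `(P - Tₖ)⁻¹ → 0` as soon as
`Tₖ → ∞`. Conversely, since `𝒮ₖ + ν𝒱ₖ` is symplectic, hence invertible, there is a normalized
conjoined basis with `Xₖ₀ = 0`; for it `-Xₖ₊₁⁻¹ X̃ₖ₊₁` is a left inverse `R` of `Tₖ`, and an
eigenvector of `Tₖ` with eigenvalue `t < c` forces `‖R‖ ≥ 1/t > 1/c`.
-/

open Matrix Filter
open scoped ComplexOrder

/-- `Z` is a conjoined basis of system `(S_ν)`: a `2n×n` matrix solution with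
`rank Zₖ = n` and `Zₖ* 𝒥 Zₖ = 0` for all `k`. -/
def IsConjoinedBasis {n : ℕ} (S : ℕ → Matrix (Fin n ⊕ Fin n) (Fin n ⊕ Fin n) ℂ)
    (W : ℕ → Matrix (Fin n) (Fin n) ℂ) (nu : ℝ)
    (Z : ℕ → Matrix (Fin n ⊕ Fin n) (Fin n) ℂ) : Prop :=
  (∀ k, Z k = (S k + (nu : ℂ) • Vmat S W k) * Z (k + 1)) ∧
    ∀ k, (Z k).rank = n ∧ (Z k)ᴴ * Jmat n * Z k = 0

/-- `Z̃ = (X̃; Ũ)` is a recessive solution of `(S_ν)`: a conjoined basis such that for all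
sufficiently large `k` the matrix `X̃ₖ` is invertible with `−X̃ₖ⁻¹ ℬₖ (X̃_{k+1}*)⁻¹ ≥ 0`,
and for every conjoined basis `Z = (X; U)` normalized with `Z̃` (i.e. `Zₖ* 𝒥 Z̃ₖ = I`),
the matrix `Xₖ` is invertible for all large `k` and `Xₖ⁻¹ X̃ₖ → 0` as `k → ∞`. -/
def IsRecessive {n : ℕ} (S : ℕ → Matrix (Fin n ⊕ Fin n) (Fin n ⊕ Fin n) ℂ)
    (W B : ℕ → Matrix (Fin n) (Fin n) ℂ) (nu : ℝ)
    (Xt Ut : ℕ → Matrix (Fin n) (Fin n) ℂ) : Prop :=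
  IsConjoinedBasis S W nu (fun k => Matrix.fromRows (Xt k) (Ut k)) ∧
    (∃ k₀ : ℕ, ∀ k, k₀ ≤ k →
      IsUnit (Xt k) ∧ (-((Xt k)⁻¹ * B k * ((Xt (k + 1))ᴴ)⁻¹)).PosSemidef) ∧
    ∀ X U : ℕ → Matrix (Fin n) (Fin n) ℂ,
      IsConjoinedBasis S W nu (fun k => Matrix.fromRows (X k) (U k)) →
      (∀ k, (Matrix.fromRows (X k) (U k))ᴴ * Jmat n * Matrix.fromRows (Xt k) (Ut k) = 1) →
      (∃ k₁ : ℕ, ∀ k, k₁ ≤ k → IsUnit (X k)) ∧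
        Filter.Tendsto (fun k => (X k)⁻¹ * Xt k) Filter.atTop (nhds 0)

/-- The system is eventually controllable: there is `N` such that on any finite subinterval
`{K,…,M}` of `[N,∞)` the only `u` with `0 = ℬₖ u_{k+1}` and `uₖ = 𝒟ₖ u_{k+1}` for all
`k ∈ {K,…,M−1}` is the trivial one. -/
def EventuallyControllable {n : ℕ} (B D : ℕ → Matrix (Fin n) (Fin n) ℂ) : Prop :=
  ∃ N : ℕ, ∀ K M : ℕ, N ≤ K → K < M →
    ∀ u : ℕ → Fin n → ℂ,
      (∀ k, K ≤ k → k < M → B k *ᵥ u (k + 1) = 0 ∧ u k = D k *ᵥ u (k + 1)) →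
      ∀ k, K ≤ k → k ≤ M → u k = 0

/-- The strong Atkinson (definiteness) condition: there are `λ₀ ∈ ℂ` and `a ≤ b` in `ℕ`
such that every solution `z` of `(S_{λ₀})` with `Σ_{k=a}^{b} zₖ*Ψₖzₖ = 0` vanishes
identically. -/
def StrongAtkinson {n : ℕ} (S : ℕ → Matrix (Fin n ⊕ Fin n) (Fin n ⊕ Fin n) ℂ)
    (W : ℕ → Matrix (Fin n) (Fin n) ℂ) : Prop :=
  ∃ (lam0 : ℂ) (a b : ℕ), a ≤ b ∧
    ∀ z : ℕ → (Fin n ⊕ Fin n) → ℂ,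
      (∀ k, z k = (S k + lam0 • Vmat S W k) *ᵥ z (k + 1)) →
      (∑ k ∈ Finset.Icc a b, star (z k) ⬝ᵥ (PsiMat W k *ᵥ z k)) = 0 →
      ∀ k, z k = 0

lemma star_one_sub_mul_mul_mul_one_sub_mul {R : Type*} [Ring R] [StarRing R] {j ψ : R}
    (hj : star j = -j) (hjj : j * j = -1) (hψ : star ψ = ψ) (hψjψ : ψ * j * ψ = 0) :
    star (1 - j * ψ) * j * (1 - j * ψ) = j := by
  calc star (1 - j * ψ) * j * (1 - j * ψ)
      = j + ψ * (j * j) - (j * j) * ψ - ψ * (j * j) * j * ψ := by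
        rw [star_sub, star_one, star_mul, hj, hψ]
        noncomm_ring
    _ = j + ψ * j * ψ := by
        rw [hjj]
        noncomm_ring
    _ = j := by rw [hψjψ, add_zero]

section Recurrences

variable {K : Type*} [CommRing K] {ι κ : Type*} [Fintype ι]

lemma exists_recurrence_eq [DecidableEq ι] (M : ℕ → Matrix ι ι K) (hM : ∀ k, IsUnit (M k)) (k₀ : ℕ)
    (Z₀ : Matrix ι κ K) : ∃ Z : ℕ → Matrix ι κ K, (∀ k, Z k = M k * Z (k + 1)) ∧ Z k₀ = Z₀ := by
  let Φ : ℕ → (Matrix ι ι K)ˣ := fun k => ((List.range k).map fun j => (hM j).unit).prod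
  have hΦ : ∀ k, Φ (k + 1) = Φ k * (hM k).unit := fun k => List.prod_range_succ _ k
  refine ⟨fun k => (((Φ k)⁻¹ : (Matrix ι ι K)ˣ) : Matrix ι ι K) * ((Φ k₀ : Matrix ι ι K) * Z₀),
    fun k => ?_, ?_⟩ <;> beta_reduce
  · rw [hΦ, _root_.mul_inv_rev, Units.val_mul, ← Matrix.mul_assoc (M k), ← Matrix.mul_assoc (M k),
      IsUnit.mul_val_inv, Matrix.one_mul]
  · rw [← Matrix.mul_assoc, Units.inv_mul, Matrix.one_mul]

lemma conjTranspose_mul_mul_eq_of_recurrence [StarRing K] {M : ℕ → Matrix ι ι K} {J : Matrix ι ι K}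
    (hM : ∀ k, (M k)ᴴ * J * M k = J) {Y Y' : ℕ → Matrix ι κ K}
    (hY : ∀ k, Y k = M k * Y (k + 1)) (hY' : ∀ k, Y' k = M k * Y' (k + 1)) (k j : ℕ) :
    (Y k)ᴴ * J * Y' k = (Y j)ᴴ * J * Y' j := by
  have h : ∀ k, (Y k)ᴴ * J * Y' k = (Y 0)ᴴ * J * Y' 0 := by
    intro k
    induction k with
    | zero => rfl
    | succ k ih =>
      rw [← ih, hY k, hY' k, conjTranspose_mul]
      conv_lhs => rw [← hM k]
      simp only [Matrix.mul_assoc]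
  rw [h k, h j]

end Recurrences

lemma neg_inv_mul_mul_eq_one {R : Type*} [CommRing R] {m : Type*} [Fintype m] [DecidableEq m]
    {X Y T : Matrix m m R} (hX : IsUnit X) (h : X = -(Y * T)) :
    -(X⁻¹ * Y) * T = 1 := by
  rw [Matrix.neg_mul, Matrix.mul_assoc, ← Matrix.mul_neg, ← h,
    nonsing_inv_mul _ ((isUnit_iff_isUnit_det X).1 hX)]

section Riccati

variable {R : Type*} [CommRing R] [StarRing R] {m : Type*} [Fintype m] [DecidableEq m]

lemma inv_mul_eq_inv_mul_sub {A B Y Y' V' X X' U' : Matrix m m R}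
    (hY : Y = A * Y' + B * V') (hX : X = A * X' + B * U')
    (hW : X'ᴴ * V' - U'ᴴ * Y' = 1) (hsym : Y'ᴴ * V' = V'ᴴ * Y')
    (hYu : IsUnit Y) (hY'u : IsUnit Y') :
    Y⁻¹ * X = Y'⁻¹ * X' - Y⁻¹ * B * (Y'ᴴ)⁻¹ := by
  have hd := (isUnit_iff_isUnit_det Y).1 hYu
  have hd' := (isUnit_iff_isUnit_det Y').1 hY'u
  have hdH := (isUnit_iff_isUnit_det Y'ᴴ).1 ((isUnit_conjTranspose _).2 hY'u)
  have hWH : V'ᴴ * X' - Y'ᴴ * U' = 1 := by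
    simpa using congrArg conjTranspose hW
  have hU : U' = V' * (Y'⁻¹ * X') - (Y'ᴴ)⁻¹ := by
    refine ((isUnit_conjTranspose _).2 hY'u).mul_left_cancel ?_
    rw [mul_sub, mul_nonsing_inv _ hdH, ← Matrix.mul_assoc, hsym, Matrix.mul_assoc,
      mul_nonsing_inv_cancel_left _ _ hd', ← hWH]
    abel
  have hX2 : X = Y * (Y'⁻¹ * X') - B * (Y'ᴴ)⁻¹ := by
    rw [hX, hU, hY, Matrix.add_mul, Matrix.mul_assoc A, mul_nonsing_inv_cancel_left _ _ hd',
      Matrix.mul_sub, Matrix.mul_assoc B]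
    abel
  rw [hX2, Matrix.mul_sub, nonsing_inv_mul_cancel_left _ _ hd, Matrix.mul_assoc]

noncomputable def Tmat (B Xt : ℕ → Matrix m m R) (k₀ k : ℕ) : Matrix m m R :=
  -(∑ j ∈ Finset.Icc k₀ k, (Xt j)⁻¹ * B j * ((Xt (j + 1))ᴴ)⁻¹)

lemma eq_mul_sub_Tmat {A B Xt Ut X U : ℕ → Matrix m m R} {k₀ : ℕ}
    (hXt : ∀ k, Xt k = A k * Xt (k + 1) + B k * Ut (k + 1))
    (hX : ∀ k, X k = A k * X (k + 1) + B k * U (k + 1))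
    (hW : ∀ k, (X k)ᴴ * Ut k - (U k)ᴴ * Xt k = 1)
    (hsym : ∀ k, (Xt k)ᴴ * Ut k = (Ut k)ᴴ * Xt k)
    (hu : ∀ k, k₀ ≤ k → IsUnit (Xt k)) {k : ℕ} (hk : k₀ ≤ k) :
    X (k + 1) = Xt (k + 1) * ((Xt k₀)⁻¹ * X k₀ - Tmat B Xt k₀ k) := by
  have step : ∀ k, k₀ ≤ k → (Xt (k + 1))⁻¹ * X (k + 1)
      = (Xt k)⁻¹ * X k + (Xt k)⁻¹ * B k * ((Xt (k + 1))ᴴ)⁻¹ := fun k hk => by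
    rw [inv_mul_eq_inv_mul_sub (hXt k) (hX k) (hW (k + 1)) (hsym (k + 1)) (hu k hk)
      (hu (k + 1) (by omega))]
    abel
  have hinv : (Xt (k + 1))⁻¹ * X (k + 1) = (Xt k₀)⁻¹ * X k₀ - Tmat B Xt k₀ k := by
    induction k, hk using Nat.le_induction with
    | base =>
      rw [step k₀ le_rfl, Tmat, Finset.Icc_self, Finset.sum_singleton]
      abel
    | succ k hk ih =>
      rw [step (k + 1) (by omega), ih, Tmat, Tmat, Finset.sum_Icc_succ_top (by omega)]
      abel
  rw [← hinv, mul_nonsing_inv_cancel_left _ _ ((isUnit_iff_isUnit_det _).1 (hu _ (by omega)))]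

end Riccati

lemma Tmat_posSemidef {𝕜 : Type*} [RCLike 𝕜] {m : Type*} [Fintype m] [DecidableEq m]
    {B Xt : ℕ → Matrix m m 𝕜} {k₀ : ℕ}
    (h : ∀ j, k₀ ≤ j → (-((Xt j)⁻¹ * B j * ((Xt (j + 1))ᴴ)⁻¹)).PosSemidef) (k : ℕ) :
    (Tmat B Xt k₀ k).PosSemidef := by
  rw [Tmat, ← Finset.sum_neg_distrib]
  exact posSemidef_sum _ fun j hj => h j (Finset.mem_Icc.1 hj).1

section OperatorNorm

open scoped Matrix.Norms.L2Operator

variable {𝕜 : Type*} [RCLike 𝕜] {m : Type*} [Fintype m] [DecidableEq m]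

lemma norm_toEuclideanCLM_apply_le (A : Matrix m m 𝕜) (x : EuclideanSpace 𝕜 m) :
    ‖toEuclideanCLM (𝕜 := 𝕜) A x‖ ≤ ‖A‖ * ‖x‖ :=
  (toEuclideanCLM (𝕜 := 𝕜) A).le_opNorm x

lemma mul_norm_sq_le_re_inner_toEuclideanCLM {T : Matrix m m 𝕜} {c : ℝ}
    (hT : (T - (c : 𝕜) • 1).PosSemidef) (x : EuclideanSpace 𝕜 m) :
    c * ‖x‖ ^ 2 ≤ RCLike.re (inner 𝕜 (toEuclideanCLM (𝕜 := 𝕜) T x) x) := by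
  have h : 0 ≤ RCLike.re (inner 𝕜 (toEuclideanCLM (𝕜 := 𝕜) (T - (c : 𝕜) • 1) x) x) :=
    (isPositive_toEuclideanLin_iff.2 hT).2 x
  rw [map_sub, map_smul, map_one, _root_.sub_apply, _root_.smul_apply, one_apply_eq_self,
    inner_sub_left, inner_smul_left, inner_self_eq_norm_sq_to_K] at h
  simpa using h

lemma mul_norm_le_norm_toEuclideanCLM {T : Matrix m m 𝕜} {c : ℝ}
    (hT : (T - (c : 𝕜) • 1).PosSemidef) (x : EuclideanSpace 𝕜 m) :
    c * ‖x‖ ≤ ‖toEuclideanCLM (𝕜 := 𝕜) T x‖ := by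
  rcases (norm_nonneg x).eq_or_lt with hx | hx
  · simp [← hx]
  refine le_of_mul_le_mul_right ?_ hx
  calc c * ‖x‖ * ‖x‖ = c * ‖x‖ ^ 2 := by ring
    _ ≤ RCLike.re (inner 𝕜 (toEuclideanCLM (𝕜 := 𝕜) T x) x) :=
        mul_norm_sq_le_re_inner_toEuclideanCLM hT x
    _ ≤ ‖toEuclideanCLM (𝕜 := 𝕜) T x‖ * ‖x‖ :=
        (RCLike.re_le_norm _).trans (norm_inner_le_norm _ _)

lemma isUnit_and_norm_inv_le {Q : Matrix m m 𝕜} {δ : ℝ} (hδ : 0 < δ)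
    (hQ : ∀ x, δ * ‖x‖ ≤ ‖toEuclideanCLM (𝕜 := 𝕜) Q x‖) : IsUnit Q ∧ ‖Q⁻¹‖ ≤ δ⁻¹ := by
  have hunit : IsUnit Q := by
    refine mulVec_injective_iff_isUnit.1 fun v w hvw => WithLp.toLp_injective 2 ?_
    have h := hQ (WithLp.toLp 2 v - WithLp.toLp 2 w)
    rw [map_sub, toEuclideanCLM_toLp, toEuclideanCLM_toLp, hvw, sub_self, norm_zero] at h
    exact sub_eq_zero.1 (norm_le_zero_iff.1 (nonpos_of_mul_nonpos_right h hδ))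
  refine ⟨hunit, ?_⟩
  rw [cstar_norm_def]
  refine ContinuousLinearMap.opNorm_le_bound _ (inv_nonneg.2 hδ.le) fun y => ?_
  have hQQ : toEuclideanCLM (𝕜 := 𝕜) Q (toEuclideanCLM (𝕜 := 𝕜) Q⁻¹ y) = y := by
    rw [← mul_apply_eq_comp, ← map_mul, mul_nonsing_inv _ ((isUnit_iff_isUnit_det Q).1 hunit),
      map_one, one_apply_eq_self]
  rw [inv_mul_eq_div, le_div_iff₀' hδ]
  simpa [hQQ] using hQ (toEuclideanCLM (𝕜 := 𝕜) Q⁻¹ y)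

lemma isUnit_sub_and_norm_inv_le {P T : Matrix m m 𝕜} {c : ℝ}
    (hT : (T - (c : 𝕜) • 1).PosSemidef) (hc : ‖P‖ < c) :
    IsUnit (P - T) ∧ ‖(P - T)⁻¹‖ ≤ (c - ‖P‖)⁻¹ := by
  refine isUnit_and_norm_inv_le (sub_pos.2 hc) fun x => ?_
  have hTx := mul_norm_le_norm_toEuclideanCLM hT x
  have hPx := norm_toEuclideanCLM_apply_le P x
  calc (c - ‖P‖) * ‖x‖ ≤ ‖toEuclideanCLM (𝕜 := 𝕜) T x‖ - ‖toEuclideanCLM (𝕜 := 𝕜) P x‖ := by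
        linarith
    _ ≤ ‖toEuclideanCLM (𝕜 := 𝕜) (P - T) x‖ := by
        rw [map_sub, _root_.sub_apply, norm_sub_rev]
        exact norm_sub_norm_le _ _

lemma exists_eigenvector_lt_of_not_posSemidef_sub {T : Matrix m m 𝕜} {c : ℝ}
    (hT : T.IsHermitian) (h : ¬(T - (c : 𝕜) • 1).PosSemidef) :
    ∃ (x : EuclideanSpace 𝕜 m) (t : ℝ), ‖x‖ = 1 ∧ t < c ∧
      toEuclideanCLM (𝕜 := 𝕜) T x = (t : 𝕜) • x := by
  have hH : (T - (c : 𝕜) • 1).IsHermitian := hT.sub (by simp [IsHermitian])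
  obtain ⟨i, hi⟩ : ∃ i, hH.eigenvalues i < 0 := by
    by_contra! hi
    exact h (hH.posSemidef_iff_eigenvalues_nonneg.2 hi)
  set x := hH.eigenvectorBasis i
  refine ⟨x, hH.eigenvalues i + c, hH.eigenvectorBasis.orthonormal.1 i, by linarith,
    WithLp.ofLp_injective 2 ?_⟩
  calc T *ᵥ x.ofLp = (T - (c : 𝕜) • 1) *ᵥ x.ofLp + ((c : 𝕜) • 1 : Matrix m m 𝕜) *ᵥ x.ofLp := by
        rw [← add_mulVec, sub_add_cancel]
    _ = (((hH.eigenvalues i + c : ℝ) : 𝕜) • x).ofLp := by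
        rw [hH.mulVec_eigenvectorBasis i, smul_mulVec, one_mulVec, RCLike.ofReal_add, add_smul,
          RCLike.real_smul_eq_coe_smul (K := 𝕜)]
        rfl

lemma posSemidef_sub_of_mul_eq_one_of_norm_lt_inv {T R : Matrix m m 𝕜} {c : ℝ}
    (hT : T.PosSemidef) (hR : R * T = 1) (hRc : ‖R‖ < c⁻¹) : (T - (c : 𝕜) • 1).PosSemidef := by
  by_contra h
  obtain ⟨x, t, hx, htc, hTx⟩ := exists_eigenvector_lt_of_not_posSemidef_sub hT.isHermitian h
  have ht : 0 ≤ t := by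
    have hq := mul_norm_sq_le_re_inner_toEuclideanCLM (c := 0) (by simpa using hT) x
    rw [hTx, inner_smul_left, inner_self_eq_norm_sq_to_K, hx] at hq
    simpa using hq
  have hRx : x = (t : 𝕜) • toEuclideanCLM (𝕜 := 𝕜) R x := by
    rw [← map_smul, ← hTx, ← mul_apply_eq_comp, ← map_mul, hR, map_one, one_apply_eq_self]
  have hc : 0 < c := ht.trans_lt htc
  refine lt_irrefl (1 : ℝ) ?_
  calc (1 : ℝ) = ‖x‖ := hx.symm
    _ = t * ‖toEuclideanCLM (𝕜 := 𝕜) R x‖ := by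
      conv_lhs => rw [hRx]
      rw [norm_smul, RCLike.norm_ofReal, abs_of_nonneg ht]
    _ ≤ c * ‖R‖ := by
      gcongr
      simpa [hx] using norm_toEuclideanCLM_apply_le R x
    _ < c * c⁻¹ := by gcongr
    _ = 1 := mul_inv_cancel₀ hc.ne'

lemma isUnit_sub_and_tendsto_inv_zero {T : ℕ → Matrix m m 𝕜}
    (hT : ∀ c : ℝ, 0 < c → ∀ᶠ k in atTop, (T k - (c : 𝕜) • 1).PosSemidef) (P : Matrix m m 𝕜) :
    (∀ᶠ k in atTop, IsUnit (P - T k)) ∧ Tendsto (fun k => (P - T k)⁻¹) atTop (nhds 0) := by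
  have hbound : ∀ c, ‖P‖ < c →
      ∀ᶠ k in atTop, IsUnit (P - T k) ∧ ‖(P - T k)⁻¹‖ ≤ (c - ‖P‖)⁻¹ := fun c hc =>
    (hT c ((norm_nonneg P).trans_lt hc)).mono fun k hk => isUnit_sub_and_norm_inv_le hk hc
  refine ⟨(hbound (‖P‖ + 1) (by linarith)).mono fun _ h => h.1,
    NormedAddGroup.tendsto_nhds_zero.2 fun ε hε => ?_⟩
  filter_upwards [hbound (‖P‖ + 2 / ε) (by simp [hε])] with k hk
  calc ‖(P - T k)⁻¹‖ ≤ ε / 2 := by simpa using hk.2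
    _ < ε := half_lt_self hε

lemma eventually_posSemidef_sub_of_tendsto {T R : ℕ → Matrix m m 𝕜}
    (hT : ∀ k, (T k).PosSemidef) (hR : ∀ᶠ k in atTop, R k * T k = 1)
    (hlim : Tendsto R atTop (nhds 0)) {c : ℝ} (hc : 0 < c) :
    ∀ᶠ k in atTop, (T k - (c : 𝕜) • 1).PosSemidef := by
  filter_upwards [hR, NormedAddGroup.tendsto_nhds_zero.1 hlim c⁻¹ (inv_pos.2 hc)] with k hRk hk
  exact posSemidef_sub_of_mul_eq_one_of_norm_lt_inv (hT k) hRk hk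

end OperatorNorm

lemma isUnit_and_tendsto_inv_mul_of_eq_mul {K : Type*} [CommRing K] [TopologicalSpace K]
    {m : Type*} [Fintype m] [DecidableEq m] {X Y Q : ℕ → Matrix m m K}
    (h : ∀ᶠ k in atTop, X (k + 1) = Y (k + 1) * Q k ∧ IsUnit (Y (k + 1)) ∧ IsUnit (Q k))
    (hlim : Tendsto (fun k => (Q k)⁻¹) atTop (nhds 0)) :
    (∃ k₁, ∀ k, k₁ ≤ k → IsUnit (X k)) ∧ Tendsto (fun k => (X k)⁻¹ * Y k) atTop (nhds 0) := by
  have hX : ∀ᶠ k in atTop, IsUnit (X (k + 1)) ∧ (X (k + 1))⁻¹ * Y (k + 1) = (Q k)⁻¹ := by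
    filter_upwards [h] with k ⟨hk, hY, hQ⟩
    rw [hk, Matrix.mul_inv_rev]
    exact ⟨hY.mul hQ, nonsing_inv_mul_cancel_right _ _ ((isUnit_iff_isUnit_det _).1 hY)⟩
  obtain ⟨K, hK⟩ := eventually_atTop.1 hX
  refine ⟨⟨K + 1, fun k hk => ?_⟩, ?_⟩
  · obtain ⟨j, rfl⟩ : ∃ j, k = j + 1 := ⟨k - 1, by omega⟩
    exact (hK j (by omega)).1
  · rw [← tendsto_add_atTop_iff_nat 1]
    exact hlim.congr' (hX.mono fun k hk => hk.2.symm)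

section SymplecticSystem

variable {n : ℕ}

lemma Jmat_mul_Jmat : Jmat n * Jmat n = -1 := by
  rw [Jmat, fromBlocks_multiply, ← fromBlocks_one, fromBlocks_neg]
  simp

lemma Jmat_conjTranspose : (Jmat n)ᴴ = -Jmat n := by
  rw [Jmat, fromBlocks_conjTranspose, fromBlocks_neg]
  simp

lemma conjTranspose_fromRows_mul_Jmat_mul_fromRows (X U X' U' : Matrix (Fin n) (Fin n) ℂ) :
    (fromRows X U)ᴴ * Jmat n * fromRows X' U' = Xᴴ * U' - Uᴴ * X' := by
  rw [conjTranspose_fromRows_eq_fromCols_conjTranspose, Jmat, fromCols_mul_fromBlocks,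
    fromCols_mul_fromRows]
  simp [sub_eq_neg_add]

lemma isUnit_of_conjTranspose_mul_Jmat_mul {M : Matrix (Fin n ⊕ Fin n) (Fin n ⊕ Fin n) ℂ}
    (hM : Mᴴ * Jmat n * M = Jmat n) : IsUnit M := by
  refine (isUnit_iff_isUnit_det M).2 (isUnit_det_of_left_inverse (B := -(Jmat n * Mᴴ * Jmat n)) ?_)
  rw [Matrix.neg_mul, Matrix.mul_assoc, Matrix.mul_assoc, ← Matrix.mul_assoc Mᴴ, hM, Jmat_mul_Jmat,
    neg_neg]

variable (S : ℕ → Matrix (Fin n ⊕ Fin n) (Fin n ⊕ Fin n) ℂ) (W : ℕ → Matrix (Fin n) (Fin n) ℂ)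
  (nu : ℝ) (k : ℕ)

lemma add_smul_Vmat_eq_mul : S k + (nu : ℂ) • Vmat S W k
    = (1 - Jmat n * ((nu : ℂ) • PsiMat W k)) * S k := by
  rw [Vmat, Matrix.sub_mul, Matrix.one_mul, Matrix.mul_smul, Matrix.smul_mul, smul_neg,
    sub_eq_add_neg, Matrix.mul_assoc]

lemma add_smul_Vmat_eq_fromBlocks {A B C D : ℕ → Matrix (Fin n) (Fin n) ℂ}
    (hblocks : S k = fromBlocks (A k) (B k) (C k) (D k)) :
    S k + (nu : ℂ) • Vmat S W k = fromBlocks (A k) (B k)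
      (C k + (nu : ℂ) • (W k * A k)) (D k + (nu : ℂ) • (W k * B k)) := by
  rw [add_smul_Vmat_eq_mul, Jmat, PsiMat, hblocks, fromBlocks_smul, fromBlocks_multiply,
    ← fromBlocks_one, sub_eq_add_neg, fromBlocks_neg, fromBlocks_add, fromBlocks_multiply]
  simp [add_comm]

lemma conjTranspose_add_smul_Vmat_mul_Jmat_mul (hS : (S k)ᴴ * Jmat n * S k = Jmat n)
    (hW : (W k).IsHermitian) :
    (S k + (nu : ℂ) • Vmat S W k)ᴴ * Jmat n * (S k + (nu : ℂ) • Vmat S W k) = Jmat n := by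
  have hE := star_one_sub_mul_mul_mul_one_sub_mul (j := Jmat n) (ψ := (nu : ℂ) • PsiMat W k)
    Jmat_conjTranspose Jmat_mul_Jmat ?_ ?_
  · calc _ = (S k)ᴴ * (star (1 - Jmat n * ((nu : ℂ) • PsiMat W k)) * Jmat n
          * (1 - Jmat n * ((nu : ℂ) • PsiMat W k))) * S k := by
          rw [add_smul_Vmat_eq_mul, conjTranspose_mul, star_eq_conjTranspose]
          simp only [Matrix.mul_assoc]
      _ = Jmat n := by rw [hE, hS]
  · rw [star_smul, Complex.star_def, Complex.conj_ofReal, star_eq_conjTranspose, PsiMat,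
      fromBlocks_conjTranspose, hW.eq]
    simp
  · simp [PsiMat, Jmat, fromBlocks_multiply]

end SymplecticSystem

section ConjoinedBasis

variable {n : ℕ} {S : ℕ → Matrix (Fin n ⊕ Fin n) (Fin n ⊕ Fin n) ℂ}
  {W : ℕ → Matrix (Fin n) (Fin n) ℂ} {nu : ℝ} {X U : ℕ → Matrix (Fin n) (Fin n) ℂ}

lemma IsConjoinedBasis.upper_eq {A B C D : ℕ → Matrix (Fin n) (Fin n) ℂ}
    (hblocks : ∀ k, S k = fromBlocks (A k) (B k) (C k) (D k))
    (hZ : IsConjoinedBasis S W nu (fun k => fromRows (X k) (U k))) (k : ℕ) :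
    X k = A k * X (k + 1) + B k * U (k + 1) := by
  have h := hZ.1 k
  rw [add_smul_Vmat_eq_fromBlocks S W nu k (hblocks k), fromBlocks_mul_fromRows] at h
  exact (fromRows_inj h).1

lemma IsConjoinedBasis.conjTranspose_mul_comm
    (hZ : IsConjoinedBasis S W nu (fun k => fromRows (X k) (U k))) (k : ℕ) :
    (X k)ᴴ * U k = (U k)ᴴ * X k := by
  have h := (hZ.2 k).2
  rw [conjTranspose_fromRows_mul_Jmat_mul_fromRows] at h
  exact sub_eq_zero.1 h

lemma IsConjoinedBasis.eq_mul_sub_Tmat {A B C D Xt Ut : ℕ → Matrix (Fin n) (Fin n) ℂ}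
    (hZ : IsConjoinedBasis S W nu (fun k => fromRows (X k) (U k)))
    (hblocks : ∀ k, S k = fromBlocks (A k) (B k) (C k) (D k))
    (hcb : IsConjoinedBasis S W nu (fun k => fromRows (Xt k) (Ut k))) {k₀ : ℕ}
    (hXt : ∀ k, k₀ ≤ k → IsUnit (Xt k))
    (hnorm : ∀ k, (fromRows (X k) (U k))ᴴ * Jmat n * fromRows (Xt k) (Ut k) = 1)
    {k : ℕ} (hk : k₀ ≤ k) :
    X (k + 1) = Xt (k + 1) * ((Xt k₀)⁻¹ * X k₀ - Tmat B Xt k₀ k) :=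
  _root_.eq_mul_sub_Tmat (hcb.upper_eq hblocks) (hZ.upper_eq hblocks)
    (fun k => by simpa [conjTranspose_fromRows_mul_Jmat_mul_fromRows] using hnorm k)
    hcb.conjTranspose_mul_comm hXt hk

lemma rank_eq_of_conjTranspose_mul_eq_one {ι : Type*} [Fintype ι]
    {Z G : Matrix ι (Fin n) ℂ} (h : Zᴴ * G = 1) : Z.rank = n := by
  refine le_antisymm (Z.rank_le_card_width.trans_eq (Fintype.card_fin n)) ?_
  calc n = (Zᴴ * G).rank := by rw [h, rank_one, Fintype.card_fin]
    _ ≤ Z.rank := (rank_mul_le_left _ _).trans_eq (rank_conjTranspose Z)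

lemma exists_normalized_conjoinedBasis (hS : ∀ k, (S k)ᴴ * Jmat n * S k = Jmat n)
    (hW : ∀ k, (W k).IsHermitian) {Xt Ut : ℕ → Matrix (Fin n) (Fin n) ℂ}
    (hcb : IsConjoinedBasis S W nu (fun k => fromRows (Xt k) (Ut k))) {k₀ : ℕ}
    (hX : IsUnit (Xt k₀)) :
    ∃ X U : ℕ → Matrix (Fin n) (Fin n) ℂ,
      IsConjoinedBasis S W nu (fun k => fromRows (X k) (U k)) ∧
      (∀ k, (fromRows (X k) (U k))ᴴ * Jmat n * fromRows (Xt k) (Ut k) = 1) ∧ X k₀ = 0 := by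
  have hM (k : ℕ) := conjTranspose_add_smul_Vmat_mul_Jmat_mul S W nu k (hS k) (hW k)
  obtain ⟨Z, hZ, hZk₀⟩ := exists_recurrence_eq _
    (fun k => isUnit_of_conjTranspose_mul_Jmat_mul (hM k)) k₀ (fromRows 0 (-((Xt k₀)ᴴ)⁻¹))
  have hnorm (k : ℕ) : (Z k)ᴴ * Jmat n * fromRows (Xt k) (Ut k) = 1 := by
    rw [conjTranspose_mul_mul_eq_of_recurrence hM hZ hcb.1 k k₀, hZk₀,
      conjTranspose_fromRows_mul_Jmat_mul_fromRows]
    simp [← conjTranspose_nonsing_inv, nonsing_inv_mul _ ((isUnit_iff_isUnit_det _).1 hX)]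
  have hiso (k : ℕ) : (Z k)ᴴ * Jmat n * Z k = 0 := by
    rw [conjTranspose_mul_mul_eq_of_recurrence hM hZ hZ k k₀, hZk₀,
      conjTranspose_fromRows_mul_Jmat_mul_fromRows]
    simp
  refine ⟨fun k => (Z k).toRows₁, fun k => (Z k).toRows₂, ?_, ?_, ?_⟩
  · simp only [fromRows_toRows]
    refine ⟨hZ, fun k => ⟨rank_eq_of_conjTranspose_mul_eq_one
      (G := Jmat n * fromRows (Xt k) (Ut k)) ?_, hiso k⟩⟩
    rw [← Matrix.mul_assoc, hnorm k]
  · simpa only [fromRows_toRows] using hnorm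
  · simp [hZk₀]

end ConjoinedBasis

theorem statement14_general {n : ℕ}
    (S : ℕ → Matrix (Fin n ⊕ Fin n) (Fin n ⊕ Fin n) ℂ)
    (A B C D W : ℕ → Matrix (Fin n) (Fin n) ℂ)
    (hS : ∀ k, (S k)ᴴ * Jmat n * S k = Jmat n)
    (hblocks : ∀ k, S k = Matrix.fromBlocks (A k) (B k) (C k) (D k))
    (hW : ∀ k, (W k).PosDef)
    (nu : ℝ)
    (Xt Ut : ℕ → Matrix (Fin n) (Fin n) ℂ)
    (hcb : IsConjoinedBasis S W nu (fun k => Matrix.fromRows (Xt k) (Ut k)))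
    (k₀ : ℕ)
    (hinv : ∀ k, k₀ ≤ k →
      IsUnit (Xt k) ∧ (-((Xt k)⁻¹ * B k * ((Xt (k + 1))ᴴ)⁻¹)).PosSemidef) :
    IsRecessive S W B nu Xt Ut ↔
      ∀ c : ℝ, 0 < c → ∃ K : ℕ, ∀ k, K ≤ k →
        (-(∑ j ∈ Finset.Icc k₀ k, (Xt j)⁻¹ * B j * ((Xt (j + 1))ᴴ)⁻¹)
          - (c : ℂ) • (1 : Matrix (Fin n) (Fin n) ℂ)).PosSemidef := by
  have hXtu (k : ℕ) (hk : k₀ ≤ k) : IsUnit (Xt k) := (hinv k hk).1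
  change _ ↔ ∀ c : ℝ, 0 < c → ∃ K : ℕ, ∀ k, K ≤ k → (Tmat B Xt k₀ k - (c : ℂ) • 1).PosSemidef
  simp only [← eventually_atTop]
  constructor
  · rintro ⟨-, -, hrec⟩ c hc
    obtain ⟨X, U, hZ, hnorm, hX₀⟩ := exists_normalized_conjoinedBasis hS
      (fun k => (hW k).isHermitian) hcb (hXtu k₀ le_rfl)
    obtain ⟨⟨k₁, hXu⟩, hlim⟩ := hrec X U hZ hnorm
    refine eventually_posSemidef_sub_of_tendsto (Tmat_posSemidef fun j hj => (hinv j hj).2)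
      (R := fun k => -((X (k + 1))⁻¹ * Xt (k + 1))) ?_
      (by simpa using ((tendsto_add_atTop_iff_nat 1).2 hlim).neg) hc
    filter_upwards [eventually_ge_atTop (max k₀ k₁)] with k hk
    refine neg_inv_mul_mul_eq_one (hXu _ (by omega)) ?_
    simpa [hX₀] using hZ.eq_mul_sub_Tmat hblocks hcb hXtu hnorm (le_of_max_le_left hk)
  · intro hdiv
    refine ⟨hcb, ⟨k₀, hinv⟩, fun X U hZ hnorm => ?_⟩
    obtain ⟨hunit, hlim⟩ := isUnit_sub_and_tendsto_inv_zero hdiv ((Xt k₀)⁻¹ * X k₀)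
    refine isUnit_and_tendsto_inv_mul_of_eq_mul ?_ hlim
    filter_upwards [hunit, eventually_ge_atTop k₀] with k hk hk₀
    exact ⟨hZ.eq_mul_sub_Tmat hblocks hcb hXtu hnorm hk₀, hXtu _ (by omega), hk⟩

/-- Characterization of the recessive solution: if `(S_ν)` is nonoscillatory
and eventually controllable and `Z̃ = (X̃; Ũ)` is a conjoined basis with `X̃ₖ` invertible and
`−X̃ₖ⁻¹ ℬₖ (X̃_{k+1}*)⁻¹ ≥ 0` for `k ≥ k₀`, then `Z̃` is a recessive solution iff the
smallest eigenvalue of `−Σ_{j=k₀}^{k} X̃_j⁻¹ ℬ_j (X̃_{j+1}*)⁻¹` tends to `+∞`, i.e. for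
every `c > 0` there is `K` with `−Σ_{j=k₀}^{k} X̃_j⁻¹ ℬ_j (X̃_{j+1}*)⁻¹ − c·Iₙ ≥ 0` for all
`k ≥ K`. -/
theorem statement14 {n : ℕ} (hn : 1 ≤ n)
    (S : ℕ → Matrix (Fin n ⊕ Fin n) (Fin n ⊕ Fin n) ℂ)
    (A B C D W : ℕ → Matrix (Fin n) (Fin n) ℂ)
    (hS : ∀ k, (S k)ᴴ * Jmat n * S k = Jmat n)
    (hblocks : ∀ k, S k = Matrix.fromBlocks (A k) (B k) (C k) (D k))
    (hW : ∀ k, (W k).PosDef)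
    (nu : ℝ)
    (hnonosc : ∃ M : ℕ, ∀ N, M ≤ N → DisconjugateOn A B C D W nu M N)
    (hctrl : EventuallyControllable B D)
    (Xt Ut : ℕ → Matrix (Fin n) (Fin n) ℂ)
    (hcb : IsConjoinedBasis S W nu (fun k => Matrix.fromRows (Xt k) (Ut k)))
    (k₀ : ℕ)
    (hinv : ∀ k, k₀ ≤ k →
      IsUnit (Xt k) ∧ (-((Xt k)⁻¹ * B k * ((Xt (k + 1))ᴴ)⁻¹)).PosSemidef) :
    IsRecessive S W B nu Xt Ut ↔
      ∀ c : ℝ, 0 < c → ∃ K : ℕ, ∀ k, K ≤ k →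
        (-(∑ j ∈ Finset.Icc k₀ k, (Xt j)⁻¹ * B j * ((Xt (j + 1))ᴴ)⁻¹)
          - (c : ℂ) • (1 : Matrix (Fin n) (Fin n) ℂ)).PosSemidef :=
  statement14_general S A B C D W hS hblocks hW nu Xt Ut hcb k₀ hinv
end

section
/- (Semiboundedness of the minimal relation, core inequality.) Assume the strong Atkinson condition and let ν ∈ ℝ be such that system (S_ν) is disconjugate on [0,∞). Let z, f : ℕ → ℂ^{2n}, zₖ = (xₖ; uₖ), be such that z₀ = 0, zₖ = 0 for all sufficiently large k, z is admissible (xₖ = 𝒜ₖ x_{k+1} + ℬₖ u_{k+1} for all k), and 𝒥(zₖ − 𝒮ₖ z_{k+1}) = Ψₖ fₖ for all k ∈ ℕ. Then Re(Σ_{k=0}^{∞} zₖ* Ψₖ fₖ) ≥ ν Σ_{k=0}^{∞} zₖ* Ψₖ zₖ (both sums have only finitely many nonzero terms and the right-hand side is real and nonnegative), with strict inequality whenever xₖ ≠ 0 for some k. -/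
open Matrix Filter
open scoped ComplexOrder

/-!
The (1,2) block of `𝒮ₖ* 𝒥 𝒮ₖ = 𝒥` is `𝒜ₖ* 𝒟ₖ − 𝒞ₖ* ℬₖ = I`, and this identity survives the
passage to `𝒞ₖ(ν)`, `𝒟ₖ(ν)` because `𝒲ₖ` is Hermitian. With it, a summation by parts (using
`x₀ = 0` and the compact support of `z`) identifies `Re Σ zₖ* Ψₖ fₖ − ν Σ zₖ* Ψₖ zₖ` with
`Re F_ν^{[0,N]}(z)`, which disconjugacy makes positive as soon as `x ≢ 0`. The `Ψ`-sum itself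
is `Σ xₖ* 𝒲ₖ xₖ ≥ 0`.
-/

section Sesquilinear

variable {m n : Type*} [Fintype m]

theorem Matrix.star_dotProduct_conjTranspose_mul_mulVec [Fintype n] {R : Type*}
    [NonUnitalSemiring R] [StarRing R] (M N : Matrix m n R) (a b : n → R) :
    star a ⬝ᵥ ((Mᴴ * N) *ᵥ b) = star (M *ᵥ a) ⬝ᵥ (N *ᵥ b) := by
  rw [← mulVec_mulVec, dotProduct_mulVec, star_mulVec]

theorem Complex.re_star_dotProduct_comm [Fintype n] (a b : n → ℂ) :
    (star a ⬝ᵥ b).re = (star b ⬝ᵥ a).re := by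
  rw [star_dotProduct a b, Complex.star_def, Complex.conj_re]

theorem conjTranspose_mul_sub_conjTranspose_mul_add_smul {A B C D : Matrix m n ℂ}
    {W : Matrix m m ℂ} (hW : W.IsHermitian) (ν : ℝ) :
    Aᴴ * (D + (ν : ℂ) • (W * B)) - (C + (ν : ℂ) • (W * A))ᴴ * B = Aᴴ * D - Cᴴ * B := by
  rw [conjTranspose_add, conjTranspose_smul, conjTranspose_mul, hW.eq, Complex.star_def,
    Complex.conj_ofReal]
  simp only [Matrix.mul_add, Matrix.add_mul, Matrix.mul_smul, Matrix.smul_mul, Matrix.mul_assoc]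
  abel

/-- The cross terms collapse to `Re (p* q)` because `𝒜*𝒟(ν) − 𝒞(ν)*ℬ = 𝒜*𝒟 − 𝒞*ℬ = I`. -/
theorem re_fquad_summand [Fintype n] [DecidableEq n] {A B C D : Matrix m n ℂ}
    {W : Matrix m m ℂ} (hW : W.IsHermitian) (hsymp : Aᴴ * D - Cᴴ * B = 1) (ν : ℝ) (p q : n → ℂ) :
    (star p ⬝ᵥ (((C + (ν : ℂ) • (W * A))ᴴ * A) *ᵥ p)
        + 2 * ((star p ⬝ᵥ (((C + (ν : ℂ) • (W * A))ᴴ * B) *ᵥ q)).re : ℂ)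
        + star q ⬝ᵥ (((D + (ν : ℂ) • (W * B))ᴴ * B) *ᵥ q)).re
      = (star (A *ᵥ p + B *ᵥ q) ⬝ᵥ (C *ᵥ p + D *ᵥ q)).re
        + ν * (star (A *ᵥ p + B *ᵥ q) ⬝ᵥ (W *ᵥ (A *ᵥ p + B *ᵥ q))).re
        - (star p ⬝ᵥ q).re := by
  set Cν := C + (ν : ℂ) • (W * A)
  set Dν := D + (ν : ℂ) • (W * B)
  have hpq : star p ⬝ᵥ q = star (A *ᵥ p) ⬝ᵥ (Dν *ᵥ q) - star (Cν *ᵥ p) ⬝ᵥ (B *ᵥ q) := by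
    rw [← Matrix.star_dotProduct_conjTranspose_mul_mulVec,
      ← Matrix.star_dotProduct_conjTranspose_mul_mulVec, ← dotProduct_sub, ← sub_mulVec,
      conjTranspose_mul_sub_conjTranspose_mul_add_smul hW, hsymp, one_mulVec]
  have hCD : C *ᵥ p + D *ᵥ q + (ν : ℂ) • (W *ᵥ (A *ᵥ p + B *ᵥ q)) = Cν *ᵥ p + Dν *ᵥ q := by
    simp only [Cν, Dν, add_mulVec, smul_mulVec, mulVec_add, mulVec_mulVec, smul_add]
    abel
  have hν : (star (A *ᵥ p + B *ᵥ q) ⬝ᵥ (C *ᵥ p + D *ᵥ q)).re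
      + ν * (star (A *ᵥ p + B *ᵥ q) ⬝ᵥ (W *ᵥ (A *ᵥ p + B *ᵥ q))).re
      = (star (A *ᵥ p + B *ᵥ q) ⬝ᵥ (Cν *ᵥ p + Dν *ᵥ q)).re := by
    rw [← hCD, dotProduct_add _ (C *ᵥ p + D *ᵥ q), dotProduct_smul, Complex.add_re, smul_eq_mul,
      Complex.re_ofReal_mul]
  rw [hν, hpq]
  simp only [Matrix.star_dotProduct_conjTranspose_mul_mulVec, star_add, add_dotProduct,
    dotProduct_add, Complex.add_re, Complex.sub_re, Complex.mul_re,
    Complex.re_ofNat, Complex.im_ofNat, Complex.ofReal_re, Complex.ofReal_im]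
  rw [Complex.re_star_dotProduct_comm (A *ᵥ p) (Cν *ᵥ p),
    Complex.re_star_dotProduct_comm (B *ᵥ q) (Cν *ᵥ p),
    Complex.re_star_dotProduct_comm (B *ᵥ q) (Dν *ᵥ q)]
  ring

end Sesquilinear

section BlockSystem

variable {n : ℕ}

theorem conjTranspose_mul_sub_eq_one_of_symplectic {A B C D : Matrix (Fin n) (Fin n) ℂ}
    (h : (fromBlocks A B C D)ᴴ * Jmat n * fromBlocks A B C D = Jmat n) :
    Aᴴ * D - Cᴴ * B = 1 := by
  rw [Jmat, fromBlocks_conjTranspose, fromBlocks_multiply, fromBlocks_multiply] at h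
  have h₁₂ := congrArg toBlocks₁₂ h
  simp only [toBlocks_fromBlocks₁₂] at h₁₂
  rw [← h₁₂]
  simp only [Matrix.mul_zero, Matrix.mul_one, Matrix.mul_neg, zero_add, add_zero,
    Matrix.neg_mul]
  abel

theorem jmat_mulVec_sumElim (p q : Fin n → ℂ) : Jmat n *ᵥ Sum.elim p q = Sum.elim q (-p) := by
  simp [Jmat, fromBlocks_mulVec, neg_mulVec]

theorem psiMat_mulVec (W : ℕ → Matrix (Fin n) (Fin n) ℂ) (k : ℕ) (v : Fin n ⊕ Fin n → ℂ) :
    PsiMat W k *ᵥ v = Sum.elim (W k *ᵥ (v ∘ Sum.inl)) 0 := by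
  simp [PsiMat, fromBlocks_mulVec]

theorem star_sumElim_dotProduct_psiMat_mulVec (W : ℕ → Matrix (Fin n) (Fin n) ℂ) (k : ℕ)
    (p q : Fin n → ℂ) (v : Fin n ⊕ Fin n → ℂ) :
    star (Sum.elim p q) ⬝ᵥ (PsiMat W k *ᵥ v) = star p ⬝ᵥ (W k *ᵥ (v ∘ Sum.inl)) := by
  rw [psiMat_mulVec, Function.star_sumElim, sumElim_dotProduct_sumElim, dotProduct_zero, add_zero]

theorem weight_mulVec_eq_of_jmat_mulVec {A B C D : Matrix (Fin n) (Fin n) ℂ}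
    {W : ℕ → Matrix (Fin n) (Fin n) ℂ} {k : ℕ} {p q p' q' : Fin n → ℂ} {v : Fin n ⊕ Fin n → ℂ}
    (h : Jmat n *ᵥ (Sum.elim p q - fromBlocks A B C D *ᵥ Sum.elim p' q') = PsiMat W k *ᵥ v) :
    W k *ᵥ (v ∘ Sum.inl) = q - (C *ᵥ p' + D *ᵥ q') := by
  rw [fromBlocks_mulVec, Sum.elim_comp_inl, Sum.elim_comp_inr, ← Sum.elim_sub_sub,
    jmat_mulVec_sumElim, psiMat_mulVec] at h
  exact (congrArg (· ∘ Sum.inl) h).symm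

end BlockSystem

theorem Finset.sum_range_succ_eq_sum_shift_of_ends_zero {M : Type*} [AddCommMonoid M]
    {g : ℕ → M} {N : ℕ} (h₀ : g 0 = 0) (hN : g (N + 1) = 0) :
    ∑ k ∈ range (N + 1), g k = ∑ k ∈ range (N + 1), g (k + 1) := by
  rw [sum_range_succ', sum_range_succ, h₀, hN]

theorem tsum_star_dotProduct_eq_sum_range {ι : Type*} [Fintype ι] {x : ℕ → ι → ℂ} {N : ℕ}
    (hx : ∀ k, N ≤ k → x k = 0) (v : ℕ → ι → ℂ) :
    ∑' k, star (x k) ⬝ᵥ v k = ∑ k ∈ Finset.range N, star (x k) ⬝ᵥ v k :=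
  tsum_eq_sum fun k hk => by
    rw [hx k (not_lt.mp (Finset.mem_range.not.mp hk)), star_zero, zero_dotProduct]

theorem re_fquad_eq {n : ℕ} {A B C D W : ℕ → Matrix (Fin n) (Fin n) ℂ}
    (hsymp : ∀ k, (A k)ᴴ * D k - (C k)ᴴ * B k = 1) (hW : ∀ k, (W k).IsHermitian) (ν : ℝ)
    {x u : ℕ → Fin n → ℂ} {N : ℕ} (hadm : ∀ k ≤ N, x k = A k *ᵥ x (k + 1) + B k *ᵥ u (k + 1))
    (hx₀ : x 0 = 0) (hxN : x (N + 1) = 0) :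
    (Fquad A B C D W ν x u 0 N).re
      = (∑ k ∈ Finset.range (N + 1),
            star (x k) ⬝ᵥ (u k - (C k *ᵥ x (k + 1) + D k *ᵥ u (k + 1)))).re
        - ν * (∑ k ∈ Finset.range (N + 1), star (x k) ⬝ᵥ (W k *ᵥ x k)).re := by
  have hIcc : Finset.Icc 0 N = Finset.range (N + 1) := by
    ext k; simp only [Finset.mem_Icc, Finset.mem_range]; omega
  have htel : ∑ k ∈ Finset.range (N + 1), star (x k) ⬝ᵥ u k
      = ∑ k ∈ Finset.range (N + 1), star (x (k + 1)) ⬝ᵥ u (k + 1) :=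
    Finset.sum_range_succ_eq_sum_shift_of_ends_zero (by rw [hx₀, star_zero, zero_dotProduct])
      (by rw [hxN, star_zero, zero_dotProduct])
  simp only [dotProduct_sub, Finset.sum_sub_distrib, htel, Complex.sub_re, Complex.re_sum,
    Finset.mul_sum, Fquad, Complex.neg_re, ← Finset.sum_neg_distrib, hIcc]
  rw [← Finset.sum_sub_distrib, ← Finset.sum_sub_distrib]
  refine Finset.sum_congr rfl fun k hk => ?_
  rw [re_fquad_summand (hW k) (hsymp k), ← hadm k (Nat.lt_succ_iff.mp (Finset.mem_range.mp hk))]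
  ring

theorem statement15_general {n : ℕ}
    (S : ℕ → Matrix (Fin n ⊕ Fin n) (Fin n ⊕ Fin n) ℂ)
    (A B C D W : ℕ → Matrix (Fin n) (Fin n) ℂ)
    (hS : ∀ k, (S k)ᴴ * Jmat n * S k = Jmat n)
    (hblocks : ∀ k, S k = Matrix.fromBlocks (A k) (B k) (C k) (D k))
    (hW : ∀ k, (W k).PosDef)
    (nu : ℝ)
    (hdis : ∀ N, DisconjugateOn A B C D W nu 0 N)
    (x u : ℕ → Fin n → ℂ) (f : ℕ → (Fin n ⊕ Fin n) → ℂ)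
    (hz0 : Sum.elim (x 0) (u 0) = 0)
    (hfin : ∃ N : ℕ, ∀ k, N ≤ k → Sum.elim (x k) (u k) = 0)
    (hadm : ∀ k, x k = A k *ᵥ x (k + 1) + B k *ᵥ u (k + 1))
    (heq : ∀ k, Jmat n *ᵥ (Sum.elim (x k) (u k) - S k *ᵥ Sum.elim (x (k + 1)) (u (k + 1)))
        = PsiMat W k *ᵥ f k) :
    (∑' k : ℕ, star (Sum.elim (x k) (u k)) ⬝ᵥ (PsiMat W k *ᵥ Sum.elim (x k) (u k))).im = 0 ∧
      0 ≤ (∑' k : ℕ, star (Sum.elim (x k) (u k)) ⬝ᵥ (PsiMat W k *ᵥ Sum.elim (x k) (u k))).re ∧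
      nu * (∑' k : ℕ, star (Sum.elim (x k) (u k)) ⬝ᵥ
            (PsiMat W k *ᵥ Sum.elim (x k) (u k))).re ≤
        (∑' k : ℕ, star (Sum.elim (x k) (u k)) ⬝ᵥ (PsiMat W k *ᵥ f k)).re ∧
      ((∃ k, x k ≠ 0) →
        nu * (∑' k : ℕ, star (Sum.elim (x k) (u k)) ⬝ᵥ
              (PsiMat W k *ᵥ Sum.elim (x k) (u k))).re <
          (∑' k : ℕ, star (Sum.elim (x k) (u k)) ⬝ᵥ (PsiMat W k *ᵥ f k)).re) := by
  obtain ⟨N, hN⟩ := hfin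
  have hx : ∀ k, N ≤ k → x k = 0 := fun k hk => congrArg (· ∘ Sum.inl) (hN k hk)
  have hx₀ : x 0 = 0 := congrArg (· ∘ Sum.inl) hz0
  have hWf k : W k *ᵥ (f k ∘ Sum.inl) = u k - (C k *ᵥ x (k + 1) + D k *ᵥ u (k + 1)) :=
    weight_mulVec_eq_of_jmat_mulVec (hblocks k ▸ heq k)
  simp only [star_sumElim_dotProduct_psiMat_mulVec, Sum.elim_comp_inl, hWf,
    tsum_star_dotProduct_eq_sum_range (N := N + 1) fun k hk => hx k (by omega)]
  have hsymp k := conjTranspose_mul_sub_eq_one_of_symplectic (hblocks k ▸ hS k)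
  have hgreen := re_fquad_eq hsymp (fun k => (hW k).isHermitian) nu (fun k _ => hadm k) hx₀
    (hx (N + 1) (by omega))
  have hG : 0 ≤ ∑ k ∈ Finset.range (N + 1), star (x k) ⬝ᵥ (W k *ᵥ x k) :=
    Finset.sum_nonneg fun k _ => (hW k).posSemidef.dotProduct_mulVec_nonneg (x k)
  obtain ⟨hre, him⟩ := Complex.nonneg_iff.mp hG
  have hpos : (∃ k, x k ≠ 0) → 0 < (Fquad A B C D W nu x u 0 N).re := fun ⟨k, hk⟩ =>
    (hdis N x u (fun k _ _ => hadm k) hx₀ (hx (N + 1) (by omega))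
      ⟨k, k.zero_le, by by_contra h; exact hk (hx k (by omega)), hk⟩).2
  refine ⟨him.symm, hre, ?_, fun h => by linarith [hpos h]⟩
  by_cases h : ∃ k, x k ≠ 0
  · linarith [hpos h]
  · push Not at h
    simp [h]

/-- Semiboundedness of the minimal relation, core inequality: under the
strong Atkinson condition and disconjugacy of `(S_ν)` on `[0,∞)`, for any compactly
supported `z = (x; u)` with `z₀ = 0`, admissible and with `𝒥(zₖ − 𝒮ₖ z_{k+1}) = Ψₖ fₖ`,
one has `Re ⟨z, f⟩_Ψ ≥ ν ⟨z, z⟩_Ψ` (the latter quantity being real and nonnegative), with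
strict inequality whenever `x` is not identically zero. -/
theorem statement15 {n : ℕ} (hn : 1 ≤ n)
    (S : ℕ → Matrix (Fin n ⊕ Fin n) (Fin n ⊕ Fin n) ℂ)
    (A B C D W : ℕ → Matrix (Fin n) (Fin n) ℂ)
    (hS : ∀ k, (S k)ᴴ * Jmat n * S k = Jmat n)
    (hblocks : ∀ k, S k = Matrix.fromBlocks (A k) (B k) (C k) (D k))
    (hW : ∀ k, (W k).PosDef)
    (hAtk : StrongAtkinson S W)
    (nu : ℝ)
    (hdis : ∀ N, DisconjugateOn A B C D W nu 0 N)
    (x u : ℕ → Fin n → ℂ) (f : ℕ → (Fin n ⊕ Fin n) → ℂ)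
    (hz0 : Sum.elim (x 0) (u 0) = 0)
    (hfin : ∃ N : ℕ, ∀ k, N ≤ k → Sum.elim (x k) (u k) = 0)
    (hadm : ∀ k, x k = A k *ᵥ x (k + 1) + B k *ᵥ u (k + 1))
    (heq : ∀ k, Jmat n *ᵥ (Sum.elim (x k) (u k) - S k *ᵥ Sum.elim (x (k + 1)) (u (k + 1)))
        = PsiMat W k *ᵥ f k) :
    (∑' k : ℕ, star (Sum.elim (x k) (u k)) ⬝ᵥ (PsiMat W k *ᵥ Sum.elim (x k) (u k))).im = 0 ∧
      0 ≤ (∑' k : ℕ, star (Sum.elim (x k) (u k)) ⬝ᵥ (PsiMat W k *ᵥ Sum.elim (x k) (u k))).re ∧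
      nu * (∑' k : ℕ, star (Sum.elim (x k) (u k)) ⬝ᵥ
            (PsiMat W k *ᵥ Sum.elim (x k) (u k))).re ≤
        (∑' k : ℕ, star (Sum.elim (x k) (u k)) ⬝ᵥ (PsiMat W k *ᵥ f k)).re ∧
      ((∃ k, x k ≠ 0) →
        nu * (∑' k : ℕ, star (Sum.elim (x k) (u k)) ⬝ᵥ
              (PsiMat W k *ᵥ Sum.elim (x k) (u k))).re <
          (∑' k : ℕ, star (Sum.elim (x k) (u k)) ⬝ᵥ (PsiMat W k *ᵥ f k)).re) :=
  statement15_general S A B C D W hS hblocks hW nu hdis x u f hz0 hfin hadm heq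
end
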